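/- arXiv:1007.4225 — 8 statements merged into one kernel-verified Lean document; each statement's English description precedes it below -/
import Mathlib

section
/- Let A ∈ ℤ^{d×n} be a matrix such that the cone spanned by its columns is strongly convex, i.e., there exists h ∈ ℝ^d with h·a_j > 0 for every column a_j of A. Then for any w ∈ ℝⁿ there exists λ > 0 such that w' = w + λ(h·A) has all coordinates strictly positive, and moreover for any A-homogeneous element f = Σ c_{uv} x^u ∂^v of the Weyl algebra (meaning A·(v-u) is constant over all terms with c_{uv} ≠ 0), the initial forms with respect to the weights (-w,w) and (-w',w') coincide: in_{(-w,w)}(f) = in_{(-w',w')}(f). -/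
open scoped Classical

/-- A monomial `x^u ∂^v` of the Weyl algebra is encoded by the pair of exponents `(u, v)`;
an element of the Weyl algebra is encoded by its (finitely supported) coefficient
function on such monomials. -/
abbrev WMon (n : ℕ) := (Fin n → ℕ) × (Fin n → ℕ)

/-- The `(-w,w)`-weight of the monomial `x^u ∂^v`. -/
noncomputable def wwt {n : ℕ} (w : Fin n → ℝ) (p : WMon n) : ℝ :=
  -(∑ i, w i * p.1 i) + ∑ i, w i * p.2 i

/-- The initial form of `f = Σ c_{uv} x^u ∂^v` with respect to `(-w,w)`: the subsum of
terms of maximal `(-w,w)`-weight. -/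
noncomputable def inW {n : ℕ} (w : Fin n → ℝ) (c : WMon n → ℂ) : WMon n → ℂ :=
  fun p => if ∀ q : WMon n, c q ≠ 0 → wwt w q ≤ wwt w p then c p else 0

/-- If the cone spanned by the columns of `A` is strongly convex (`h·aⱼ > 0` for all
columns), then for any `w ∈ ℝⁿ` there is `λ > 0` with `w' = w + λ(h·A)` coordinatewise
positive, and for every `A`-homogeneous element `f` of the Weyl algebra
`in_{(-w,w)}(f) = in_{(-w',w')}(f)`. -/
theorem stmt3 (d n : ℕ) (A : Matrix (Fin d) (Fin n) ℤ) (h : Fin d → ℝ)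
    (hconv : ∀ j, 0 < ∑ i, h i * (A i j : ℝ)) (w : Fin n → ℝ) :
    ∃ lam : ℝ, 0 < lam ∧
      (∀ i, 0 < w i + lam * ∑ k, h k * (A k i : ℝ)) ∧
      ∀ c : WMon n → ℂ, {p | c p ≠ 0}.Finite →
        (∃ m : Fin d → ℤ, ∀ p : WMon n, c p ≠ 0 →
          A.mulVec (fun j => (p.2 j : ℤ) - (p.1 j : ℤ)) = m) →
        inW w c = inW (fun i => w i + lam * ∑ k, h k * (A k i : ℝ)) c := by
  set s : Fin n → ℝ := fun i => ∑ k, h k * (A k i : ℝ) with hs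
  have hspos : ∀ i, 0 < s i := hconv
  set lam : ℝ := 1 + ∑ i, |w i| / s i with hlam
  have hnonneg : ∀ i ∈ Finset.univ, 0 ≤ |w i| / s i := fun i _ =>
    div_nonneg (abs_nonneg _) (hspos i).le
  have hlampos : 0 < lam := by
    have := Finset.sum_nonneg hnonneg
    simp only [hlam]; linarith
  refine ⟨lam, hlampos, ?_, ?_⟩
  · intro i
    have hle : |w i| / s i ≤ ∑ j, |w j| / s j :=
      Finset.single_le_sum hnonneg (Finset.mem_univ i)
    have h1 : |w i| / s i < lam := by simp only [hlam]; linarith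
    have h2 : |w i| < lam * s i := by
      have := (div_lt_iff₀ (hspos i)).mp h1
      linarith
    have := neg_abs_le (w i)
    linarith
  · intro c _ ⟨m, hm⟩
    set w' : Fin n → ℝ := fun i => w i + lam * s i with hw'
    have key : ∀ p : WMon n, c p ≠ 0 →
        wwt w' p = wwt w p + lam * ∑ k, h k * (m k : ℝ) := by
      intro p hp
      have hmv := hm p hp
      have hk : ∀ k, (∑ j, (A k j : ℝ) * ((p.2 j : ℝ) - (p.1 j : ℝ))) = (m k : ℝ) := by
        intro k
        have hmk := congrFun hmv k
        simp only [Matrix.mulVec, dotProduct] at hmk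
        exact_mod_cast hmk
      have hswap : (∑ i, s i * ((p.2 i : ℝ) - (p.1 i : ℝ)))
          = ∑ k, h k * (m k : ℝ) := by
        calc (∑ i, s i * ((p.2 i : ℝ) - (p.1 i : ℝ)))
            = ∑ i, ∑ k, h k * ((A k i : ℝ) * ((p.2 i : ℝ) - (p.1 i : ℝ))) := by
              refine Finset.sum_congr rfl fun i _ => ?_
              rw [hs, Finset.sum_mul]
              exact Finset.sum_congr rfl fun k _ => by ring
          _ = ∑ k, ∑ i, h k * ((A k i : ℝ) * ((p.2 i : ℝ) - (p.1 i : ℝ))) :=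
              Finset.sum_comm
          _ = ∑ k, h k * (m k : ℝ) := by
              refine Finset.sum_congr rfl fun k _ => ?_
              rw [← Finset.mul_sum, hk k]
      have expand : wwt w' p = wwt w p + lam * ∑ i, s i * ((p.2 i : ℝ) - (p.1 i : ℝ)) := by
        simp only [wwt, hw', Finset.mul_sum, ← Finset.sum_neg_distrib,
          ← Finset.sum_add_distrib]
        exact Finset.sum_congr rfl fun i _ => by ring
      rw [expand, hswap]
    funext p
    by_cases hc : c p = 0
    · simp only [inW, hc]
      split <;> split <;> rfl
    · have hiff : (∀ q : WMon n, c q ≠ 0 → wwt w q ≤ wwt w p) ↔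
          (∀ q : WMon n, c q ≠ 0 → wwt w' q ≤ wwt w' p) := by
        constructor <;> intro H q hq <;>
          have h1 := key q hq <;> have h2 := key p hc <;>
          have h3 := H q hq <;> linarith
      simp only [inW]
      exact if_congr hiff rfl rfl
end

section
/- Let I ⊂ ℂ[∂₁,…,∂ₙ] be an ideal, ρ(I) ⊂ ℂ[∂₀,∂₁,…,∂ₙ] its homogenization, and w ∈ ℝ_{≥0}ⁿ generic so that in_w(I) and in_{(0,w)}(ρ(I)) are both monomial ideals. If in_{(0,w)}(ρ(I)) = ∩ᵢ Qᵢ is a primary decomposition into monomial primary ideals, then in_w(I) = ∩_{i : ∂₀ ∉ √Qᵢ} ⟨f(1,∂₁,…,∂ₙ) : f ∈ Qᵢ⟩ is a primary decomposition of in_w(I). -/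
open MvPolynomial
open scoped Classical

/-- The `w`-weight of a monomial exponent. -/
noncomputable def wdeg {n : ℕ} (w : Fin n → ℝ) (m : Fin n →₀ ℕ) : ℝ := ∑ i, w i * m i

/-- The initial form of a polynomial with respect to `w`: the subsum of terms of
maximal `w`-weight. -/
noncomputable def inForm {n : ℕ} (w : Fin n → ℝ) (f : MvPolynomial (Fin n) ℂ) :
    MvPolynomial (Fin n) ℂ :=
  ∑ m ∈ f.support.filter (fun m => ∀ m' ∈ f.support, wdeg w m' ≤ wdeg w m),
    monomial m (coeff m f)

/-- The initial ideal `in_w(I)`, generated by the initial forms of the nonzero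
elements of `I`. -/
noncomputable def inIdeal {n : ℕ} (w : Fin n → ℝ) (I : Ideal (MvPolynomial (Fin n) ℂ)) :
    Ideal (MvPolynomial (Fin n) ℂ) :=
  Ideal.span {g | ∃ f ∈ I, f ≠ 0 ∧ g = inForm w f}

/-- The homogenization `ρ(f) = Σ c_u ∂₀^{deg f - |u|} ∂^u` of `f = Σ c_u ∂^u`. -/
noncomputable def homog {n : ℕ} (f : MvPolynomial (Fin n) ℂ) :
    MvPolynomial (Fin (n + 1)) ℂ :=
  ∑ m ∈ f.support,
    monomial (Finsupp.equivFunOnFinite.symm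
      (Fin.cons (f.totalDegree - m.sum fun _ e => e) (fun i => m i))) (coeff m f)

/-- The homogenized ideal `ρ(I)`, generated by the `ρ(f)` for `f ∈ I`. -/
noncomputable def homogIdeal {n : ℕ} (I : Ideal (MvPolynomial (Fin n) ℂ)) :
    Ideal (MvPolynomial (Fin (n + 1)) ℂ) :=
  Ideal.span {g | ∃ f ∈ I, g = homog f}

/-- A monomial ideal is one generated by monomials. -/
def IsMonomialIdeal {σ : Type*} (J : Ideal (MvPolynomial σ ℂ)) : Prop :=
  ∃ S : Set (σ →₀ ℕ),
    J = Ideal.span ((fun m => (monomial m 1 : MvPolynomial σ ℂ)) '' S)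

/-- The dehomogenization map `f(∂₀,∂₁,…,∂ₙ) ↦ f(1,∂₁,…,∂ₙ)`. -/
noncomputable def deh (n : ℕ) : MvPolynomial (Fin (n + 1)) ℂ →ₐ[ℂ] MvPolynomial (Fin n) ℂ :=
  aeval (Fin.cases (1 : MvPolynomial (Fin n) ℂ) X)

/-! Since `∂₀` has weight `0`, setting `∂₀ = 1` commutes with taking `w`-weight components, and
`ρ(f)` dehomogenizes to `f` without cancellation; hence dehomogenization maps
`in_{(0,w)}(ρ(I))` onto `in_w(I)`. For monomial ideals, dehomogenization commutes with finite
intersections (multiply by a common power of `∂₀`) and sends a component with `∂₀ ∈ √Qᵢ` to the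
unit ideal. On a primary monomial `Qᵢ` with `∂₀ ∉ √Qᵢ`, primarity strips `∂₀` off every
generator, so the dehomogenized ideal is the contraction of `Qᵢ` to `ℂ[∂₁,…,∂ₙ]`, which is
primary. -/

namespace Finsupp

variable {n : ℕ}

lemma cons_add_cons {M : Type*} [AddZeroClass M] (a b : M) (s t : Fin n →₀ M) :
    cons a s + cons b t = cons (a + b) (s + t) := by
  ext i
  cases i using Fin.cases <;> simp

lemma cons_le_cons_iff {M : Type*} [Zero M] [LE M] {a b : M} {s t : Fin n →₀ M} :
    cons a s ≤ cons b t ↔ a ≤ b ∧ s ≤ t := by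
  simp [Finsupp.le_def, Fin.forall_fin_succ]

lemma mapDomain_succ {M : Type*} [AddCommMonoid M] (s : Fin n →₀ M) :
    mapDomain Fin.succ s = cons 0 s := by
  ext i
  cases i using Fin.cases with
  | zero => simp [mapDomain_of_notMem_range]
  | succ j => simp [mapDomain_apply (Fin.succ_injective n)]

lemma weight_cons_zero {M : Type*} [AddCommMonoid M] (w : Fin n → M) (v : Fin (n + 1) →₀ ℕ) :
    weight (Fin.cons 0 w) v = weight w (tail v) := by
  simp [weight_apply, sum_fintype, Fin.sum_univ_succ, tail_apply]

end Finsupp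

open Finsupp

lemma wdeg_eq_weight {n : ℕ} (w : Fin n → ℝ) : wdeg w = weight w := by
  ext m
  simp [wdeg, weight_apply, sum_fintype, mul_comm]

namespace MvPolynomial

variable {σ R : Type*} [CommSemiring R]

lemma weightedHomogeneousComponent_monomial {M : Type*} [AddCommMonoid M] (w : σ → M) (W : M)
    (v : σ →₀ ℕ) (c : R) :
    weightedHomogeneousComponent w W (monomial v c) =
      if weight w v = W then monomial v c else 0 := by
  ext d
  rcases eq_or_ne v d with rfl | hvd <;>
    simp [coeff_weightedHomogeneousComponent, apply_ite (coeff _), coeff_monomial, *]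

lemma support_sum_monomial_subset {ι : Type*} [DecidableEq σ] (s : Finset ι) (e : ι → σ →₀ ℕ)
    (c : ι → R) : (∑ i ∈ s, monomial (e i) (c i)).support ⊆ s.image e :=
  support_sum.trans <| Finset.biUnion_subset.2 fun _ hi =>
    support_monomial_subset.trans (Finset.singleton_subset_iff.2 (Finset.mem_image_of_mem e hi))

lemma monomial_one_mem_of_le {J : Ideal (MvPolynomial σ R)} {s u : σ →₀ ℕ}
    (hs : monomial s (1 : R) ∈ J) (hsu : s ≤ u) : monomial u (1 : R) ∈ J := by
  rw [← tsub_add_cancel_of_le hsu, ← one_mul (1 : R), ← monomial_mul]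
  exact J.mul_mem_left _ hs

end MvPolynomial

lemma inForm_eq_weightedHomogeneousComponent {n : ℕ} {w : Fin n → ℝ} {f : MvPolynomial (Fin n) ℂ}
    {m : Fin n →₀ ℕ} (hm : m ∈ f.support) (hmax : ∀ m' ∈ f.support, weight w m' ≤ weight w m) :
    inForm w f = weightedHomogeneousComponent w (weight w m) f := by
  rw [weightedHomogeneousComponent_apply, inForm, wdeg_eq_weight]
  refine Finset.sum_congr (Finset.filter_congr fun m' hm' => ?_) fun _ _ => rfl
  exact ⟨fun h => le_antisymm (hmax m' hm') (h m hm), fun h m'' hm'' => h ▸ hmax m'' hm''⟩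

section Dehomogenization

variable {n : ℕ}

lemma deh_monomial (v : Fin (n + 1) →₀ ℕ) (c : ℂ) :
    deh n (monomial v c) = monomial (tail v) c := by
  rw [deh, aeval_monomial, monomial_eq, prod_fintype _ _ fun _ => pow_zero _,
    prod_fintype _ _ fun _ => pow_zero _, Fin.prod_univ_succ]
  simp [tail_apply, algebraMap_eq]

lemma support_deh_subset (p : MvPolynomial (Fin (n + 1)) ℂ) :
    (deh n p).support ⊆ p.support.image tail := by
  conv_lhs => rw [← support_sum_monomial_coeff p]
  simpa only [map_sum, deh_monomial] using support_sum_monomial_subset _ _ _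

lemma deh_weightedHomogeneousComponent (w : Fin n → ℝ) (W : ℝ) (p : MvPolynomial (Fin (n + 1)) ℂ) :
    deh n (weightedHomogeneousComponent (Fin.cons 0 w) W p) =
      weightedHomogeneousComponent w W (deh n p) := by
  induction p using MvPolynomial.induction_on' with
  | monomial v c =>
    rw [weightedHomogeneousComponent_monomial, deh_monomial, weightedHomogeneousComponent_monomial,
      weight_cons_zero]
    split_ifs <;> simp [deh_monomial]
  | add p q hp hq => simp only [map_add, hp, hq]

lemma deh_inForm_of_forall_le {w : Fin n → ℝ} {h : MvPolynomial (Fin (n + 1)) ℂ}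
    {m : Fin n →₀ ℕ} (hm : m ∈ (deh n h).support)
    (hmax : ∀ v ∈ h.support, weight (Fin.cons 0 w) v ≤ weight w m) :
    deh n (inForm (Fin.cons 0 w) h) = inForm w (deh n h) := by
  obtain ⟨v, hv, rfl⟩ := Finset.mem_image.1 (support_deh_subset h hm)
  have hmax' : ∀ u ∈ (deh n h).support, weight w u ≤ weight w (tail v) := by
    intro u hu
    obtain ⟨v', hv', rfl⟩ := Finset.mem_image.1 (support_deh_subset h hu)
    rw [← weight_cons_zero]
    exact hmax v' hv'
  rw [inForm_eq_weightedHomogeneousComponent hv (by simpa only [weight_cons_zero] using hmax),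
    deh_weightedHomogeneousComponent, weight_cons_zero,
    inForm_eq_weightedHomogeneousComponent hm hmax']

lemma deh_inForm {w : Fin n → ℝ} {h : MvPolynomial (Fin (n + 1)) ℂ}
    (hne : deh n (inForm (Fin.cons 0 w) h) ≠ 0) :
    deh n (inForm (Fin.cons 0 w) h) = inForm w (deh n h) := by
  have hsupp : h.support.Nonempty := by
    rw [Finset.nonempty_iff_ne_empty, Ne, MvPolynomial.support_eq_empty]
    rintro rfl
    simp [inForm] at hne
  obtain ⟨v, hv, hvmax⟩ := Finset.exists_max_image h.support (weight (Fin.cons 0 w)) hsupp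
  rw [inForm_eq_weightedHomogeneousComponent hv hvmax, deh_weightedHomogeneousComponent] at hne
  obtain ⟨m, hm⟩ := ne_zero_iff.1 hne
  rw [coeff_weightedHomogeneousComponent] at hm
  split_ifs at hm with hmW
  · exact deh_inForm_of_forall_le (MvPolynomial.mem_support_iff.2 hm) (hmW ▸ hvmax)
  · exact absurd rfl hm

lemma tail_mem_support_of_mem_support_homog (f : MvPolynomial (Fin n) ℂ) {v : Fin (n + 1) →₀ ℕ}
    (hv : v ∈ (homog f).support) : tail v ∈ f.support := by
  obtain ⟨m, hm, rfl⟩ := Finset.mem_image.1 (support_sum_monomial_subset _ _ _ hv)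
  convert hm
  exact tail_cons _ _

lemma deh_homog (f : MvPolynomial (Fin n) ℂ) : deh n (homog f) = f := by
  conv_rhs => rw [← support_sum_monomial_coeff f]
  rw [homog, map_sum]
  refine Finset.sum_congr rfl fun m _ => ?_
  rw [deh_monomial]
  congr 2
  exact tail_cons _ _

lemma deh_inForm_homog (w : Fin n → ℝ) {f : MvPolynomial (Fin n) ℂ} (hf : f ≠ 0) :
    deh n (inForm (Fin.cons 0 w) (homog f)) = inForm w f := by
  obtain ⟨m, hm, hmax⟩ := Finset.exists_max_image f.support (weight w) (support_nonempty.2 hf)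
  have := deh_inForm_of_forall_le (w := w) (h := homog f) (by rwa [deh_homog]) fun v hv => by
    rw [weight_cons_zero]
    exact hmax _ (tail_mem_support_of_mem_support_homog f hv)
  rwa [deh_homog] at this

lemma homogIdeal_le_comap_deh (I : Ideal (MvPolynomial (Fin n) ℂ)) :
    homogIdeal I ≤ I.comap (deh n) :=
  Ideal.span_le.2 <| by
    rintro _ ⟨f, hf, rfl⟩
    simpa [deh_homog] using hf

lemma inIdeal_eq_map_deh (w : Fin n → ℝ) (I : Ideal (MvPolynomial (Fin n) ℂ)) :
    inIdeal w I = Ideal.map (deh n) (inIdeal (Fin.cons 0 w) (homogIdeal I)) := by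
  apply le_antisymm
  · rw [inIdeal, Ideal.span_le]
    rintro _ ⟨f, hf, hf0, rfl⟩
    rw [← deh_inForm_homog w hf0]
    refine Ideal.mem_map_of_mem _
      (Ideal.subset_span ⟨homog f, Ideal.subset_span ⟨f, hf, rfl⟩, ?_, rfl⟩)
    rintro h0
    exact hf0 (by rw [← deh_homog f, h0, map_zero])
  · rw [Ideal.map_le_iff_le_comap, inIdeal, Ideal.span_le]
    rintro _ ⟨h, hh, -, rfl⟩
    by_cases hz : deh n (inForm (Fin.cons 0 w) h) = 0
    · simp [hz]
    · rw [SetLike.mem_coe, Ideal.mem_comap, deh_inForm hz]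
      refine Ideal.subset_span ⟨deh n h, homogIdeal_le_comap_deh I hh, ?_, rfl⟩
      rintro h0
      rw [deh_inForm hz, h0] at hz
      simp [inForm] at hz

end Dehomogenization

section MonomialIdeals

lemma IsMonomialIdeal.mem_iff {σ : Type*} {J : Ideal (MvPolynomial σ ℂ)} (hJ : IsMonomialIdeal J)
    {f : MvPolynomial σ ℂ} : f ∈ J ↔ ∀ u ∈ f.support, monomial u (1 : ℂ) ∈ J := by
  obtain ⟨S, rfl⟩ := hJ
  simp [mem_ideal_span_monomial_image, support_monomial]

lemma isMonomialIdeal_of_forall_mem_iff {σ : Type*} {J : Ideal (MvPolynomial σ ℂ)}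
    (hJ : ∀ f, f ∈ J ↔ ∀ u ∈ f.support, monomial u (1 : ℂ) ∈ J) : IsMonomialIdeal J := by
  refine ⟨{u | monomial u 1 ∈ J}, Ideal.ext fun f => ?_⟩
  rw [hJ, mem_ideal_span_monomial_image]
  exact forall₂_congr fun u _ => ⟨fun hu => ⟨u, hu, le_rfl⟩,
    fun ⟨s, hs, hsu⟩ => monomial_one_mem_of_le hs hsu⟩

lemma IsMonomialIdeal.iInf {σ ι : Type*} {J : ι → Ideal (MvPolynomial σ ℂ)}
    (hJ : ∀ i, IsMonomialIdeal (J i)) : IsMonomialIdeal (⨅ i, J i) :=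
  isMonomialIdeal_of_forall_mem_iff fun f => by
    simp only [Ideal.mem_iInf]
    exact ⟨fun h u hu i => (hJ i).mem_iff.1 (h i) u hu,
      fun h i => (hJ i).mem_iff.2 fun u hu => h u hu i⟩

variable {n : ℕ}

lemma deh_rename_succ (p : MvPolynomial (Fin n) ℂ) : deh n (rename Fin.succ p) = p := by
  rw [deh, aeval_rename]
  exact aeval_X_left_apply p

lemma map_deh_span_monomial (S : Set (Fin (n + 1) →₀ ℕ)) :
    (Ideal.span ((fun s => monomial s (1 : ℂ)) '' S)).map (deh n) =
      Ideal.span ((fun u => monomial u (1 : ℂ)) '' (tail '' S)) := by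
  rw [Ideal.map_span, Set.image_image, Set.image_image]
  simp only [deh_monomial]

lemma IsMonomialIdeal.map_deh {J : Ideal (MvPolynomial (Fin (n + 1)) ℂ)} (hJ : IsMonomialIdeal J) :
    IsMonomialIdeal (J.map (deh n)) := by
  obtain ⟨S, rfl⟩ := hJ
  exact ⟨tail '' S, map_deh_span_monomial S⟩

lemma IsMonomialIdeal.monomial_mem_map_deh_iff {J : Ideal (MvPolynomial (Fin (n + 1)) ℂ)}
    (hJ : IsMonomialIdeal J) {u : Fin n →₀ ℕ} :
    monomial u (1 : ℂ) ∈ J.map (deh n) ↔ ∃ k, monomial (cons k u) (1 : ℂ) ∈ J := by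
  refine ⟨fun hu => ?_, fun ⟨k, hk⟩ => by
    simpa [deh_monomial] using Ideal.mem_map_of_mem (deh n) hk⟩
  obtain ⟨S, rfl⟩ := hJ
  rw [map_deh_span_monomial, mem_ideal_span_monomial_image] at hu
  obtain ⟨_, ⟨s, hs, rfl⟩, hsu⟩ := hu u (by simp [support_monomial])
  refine ⟨s 0, monomial_one_mem_of_le (Ideal.subset_span ⟨s, hs, rfl⟩) ?_⟩
  calc s = cons (s 0) (tail s) := (cons_tail s).symm
    _ ≤ cons (s 0) u := cons_le_cons_iff.2 ⟨le_rfl, hsu⟩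

lemma map_deh_iInf {ι : Type*} [Fintype ι] {J : ι → Ideal (MvPolynomial (Fin (n + 1)) ℂ)}
    (hJ : ∀ i, IsMonomialIdeal (J i)) :
    (⨅ i, J i).map (deh n) = ⨅ i, (J i).map (deh n) := by
  refine le_antisymm (le_iInf fun i => Ideal.map_mono (iInf_le J i)) fun f hf => ?_
  have hJinf := IsMonomialIdeal.iInf hJ
  refine hJinf.map_deh.mem_iff.2 fun u hu => hJinf.monomial_mem_map_deh_iff.2 ?_
  choose k hk using fun i =>
    (hJ i).monomial_mem_map_deh_iff.1 ((hJ i).map_deh.mem_iff.1 (Ideal.mem_iInf.1 hf i) u hu)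
  refine ⟨∑ i, k i, Ideal.mem_iInf.2 fun i => monomial_one_mem_of_le (hk i) ?_⟩
  exact cons_le_cons_iff.2
    ⟨Finset.single_le_sum (fun j _ => Nat.zero_le (k j)) (Finset.mem_univ i), le_rfl⟩

lemma map_deh_eq_top {J : Ideal (MvPolynomial (Fin (n + 1)) ℂ)} (hX : X 0 ∈ J.radical) :
    J.map (deh n) = ⊤ := by
  obtain ⟨k, hk⟩ := Ideal.mem_radical_iff.1 hX
  rw [Ideal.eq_top_iff_one]
  simpa [deh] using Ideal.mem_map_of_mem (deh n) hk

lemma IsMonomialIdeal.map_deh_eq_comap_rename {J : Ideal (MvPolynomial (Fin (n + 1)) ℂ)}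
    (hJ : IsMonomialIdeal J) (hprim : J.IsPrimary) (hX : X 0 ∉ J.radical) :
    J.map (deh n) = J.comap (rename Fin.succ) := by
  refine le_antisymm ?_ (Ideal.comap_le_map_of_inverse (f := rename Fin.succ) _ _ deh_rename_succ)
  obtain ⟨S, hS⟩ := hJ
  rw [Ideal.map_le_iff_le_comap, hS, Ideal.span_le]
  rintro _ ⟨s, hs, rfl⟩
  have hsplit : monomial (cons 0 (tail s)) (1 : ℂ) * X 0 ^ s 0 ∈ J := by
    rw [X_pow_eq_monomial, monomial_mul, one_mul, ← cons_zero_eq_single_zero, cons_add_cons,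
      zero_add, add_zero, cons_tail, hS]
    exact Ideal.subset_span ⟨s, hs, rfl⟩
  have hmem := ((Ideal.isPrimary_iff.1 hprim).2 hsplit).resolve_right
    fun h => hX (Ideal.mem_radical_of_pow_mem h)
  rw [← hS]
  simpa [deh_monomial, rename_monomial, mapDomain_succ] using hmem

end MonomialIdeals

theorem stmt4_general (n : ℕ) (w : Fin n → ℝ)
    (I : Ideal (MvPolynomial (Fin n) ℂ)) (m : ℕ)
    (Q : Fin m → Ideal (MvPolynomial (Fin (n + 1)) ℂ))
    (hQmon : ∀ i, IsMonomialIdeal (Q i))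
    (hQprim : ∀ i, (Q i).IsPrimary)
    (hdec : inIdeal (Fin.cons 0 w) (homogIdeal I) = ⨅ i, Q i) :
    inIdeal w I = (⨅ i, ⨅ (_ : (X 0 : MvPolynomial (Fin (n + 1)) ℂ) ∉ (Q i).radical),
        Ideal.map (deh n) (Q i)) ∧
    ∀ i, (X 0 : MvPolynomial (Fin (n + 1)) ℂ) ∉ (Q i).radical →
      (Ideal.map (deh n) (Q i)).IsPrimary := by
  refine ⟨?_, fun i hi => ?_⟩
  · rw [inIdeal_eq_map_deh, hdec, map_deh_iInf hQmon]
    refine iInf_congr fun i => ?_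
    by_cases hi : (X 0 : MvPolynomial (Fin (n + 1)) ℂ) ∈ (Q i).radical
    · simp [hi, map_deh_eq_top]
    · simp [hi]
  · rw [(hQmon i).map_deh_eq_comap_rename (hQprim i) hi]
    exact (hQprim i).comap _

/-- Dehomogenizing a primary decomposition of `in_{(0,w)}(ρ(I))` and discarding the
components whose radical contains `∂₀` yields a primary decomposition of `in_w(I)`. -/
theorem stmt4 (n : ℕ) (w : Fin n → ℝ) (hw : ∀ i, 0 ≤ w i)
    (I : Ideal (MvPolynomial (Fin n) ℂ)) (m : ℕ)
    (Q : Fin m → Ideal (MvPolynomial (Fin (n + 1)) ℂ))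
    (hmonI : IsMonomialIdeal (inIdeal w I))
    (hmonH : IsMonomialIdeal (inIdeal (Fin.cons 0 w) (homogIdeal I)))
    (hQmon : ∀ i, IsMonomialIdeal (Q i))
    (hQprim : ∀ i, (Q i).IsPrimary)
    (hdec : inIdeal (Fin.cons 0 w) (homogIdeal I) = ⨅ i, Q i) :
    inIdeal w I = (⨅ i, ⨅ (_ : (X 0 : MvPolynomial (Fin (n + 1)) ℂ) ∉ (Q i).radical),
        Ideal.map (deh n) (Q i)) ∧
    ∀ i, (X 0 : MvPolynomial (Fin (n + 1)) ℂ) ∉ (Q i).radical →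
      (Ideal.map (deh n) (Q i)).IsPrimary :=
  stmt4_general n w I m Q hQmon hQprim hdec
end

section
/- For λ ∈ ℂ and m ∈ ℕ let [λ]_m = λ(λ-1)⋯(λ-m+1) denote the descending factorial, and for j ≥ 1 let c_j(λ,m) = Σ_{S ⊆ {1,…,m}, |S| = m-j} ∏_{i ∈ S} (λ - i + 1). If λ ∉ ℤ, then lim_{m→∞} c_j(λ,m)/[λ-j]_m = 0 for each fixed j ≥ 1. -/
/-- `c_j(λ,m) = Σ_{S ⊆ {1,…,m}, |S| = m-j} ∏_{i ∈ S} (λ - i + 1)`. -/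
noncomputable def cjm (lam : ℂ) (j m : ℕ) : ℂ :=
  ∑ S ∈ Finset.powersetCard (m - j) (Finset.Icc 1 m), ∏ i ∈ S, (lam - i + 1)

/-- The descending factorial `[μ]_m = μ(μ-1)⋯(μ-m+1)`. -/
noncomputable def dfac (mu : ℂ) (m : ℕ) : ℂ := ∏ r ∈ Finset.range m, (mu - r)

lemma dfac_add (mu : ℂ) (a b : ℕ) : dfac mu (a + b) = dfac mu a * dfac (mu - a) b := by
  induction b with
  | zero => simp [dfac]
  | succ b ih =>
    rw [← Nat.add_assoc]
    simp only [dfac, Finset.prod_range_succ] at ih ⊢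
    rw [ih]
    push_cast
    ring

lemma dfac_ne_zero (lam : ℂ) (hlam : ∀ z : ℤ, lam ≠ (z : ℂ)) (n m : ℕ) :
    dfac (lam - n) m ≠ 0 := by
  rw [dfac]
  refine Finset.prod_ne_zero_iff.2 fun r _ h => hlam ((n : ℤ) + r) ?_
  push_cast
  linear_combination h

lemma factor_ne_zero (lam : ℂ) (hlam : ∀ z : ℤ, lam ≠ (z : ℂ)) (i : ℕ) :
    lam - i + 1 ≠ 0 := by
  intro h
  exact hlam ((i : ℤ) - 1) (by push_cast; linear_combination h)

lemma prod_Icc_eq_dfac (lam : ℂ) (m : ℕ) :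
    ∏ i ∈ Finset.Icc 1 m, (lam - i + 1) = dfac lam m := by
  induction m with
  | zero => simp [dfac]
  | succ m ih =>
    rw [Finset.prod_Icc_succ_top (by omega), ih]
    simp only [dfac, Finset.prod_range_succ]
    push_cast
    ring

lemma cjm_eq (lam : ℂ) (hlam : ∀ z : ℤ, lam ≠ (z : ℂ)) (j m : ℕ) (hjm : j ≤ m) :
    cjm lam j m
      = dfac lam m * ∑ T ∈ Finset.powersetCard j (Finset.Icc 1 m),
          ∏ i ∈ T, (lam - i + 1)⁻¹ := by
  classical
  rw [cjm, ← prod_Icc_eq_dfac, Finset.mul_sum]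
  refine Finset.sum_nbij' (fun S => Finset.Icc 1 m \ S) (fun T => Finset.Icc 1 m \ T)
    ?_ ?_ ?_ ?_ ?_
  · intro S hS
    rw [Finset.mem_powersetCard] at hS ⊢
    refine ⟨Finset.sdiff_subset, ?_⟩
    rw [Finset.card_sdiff_of_subset hS.1, hS.2, Nat.card_Icc]
    omega
  · intro T hT
    rw [Finset.mem_powersetCard] at hT ⊢
    refine ⟨Finset.sdiff_subset, ?_⟩
    rw [Finset.card_sdiff_of_subset hT.1, hT.2, Nat.card_Icc]
    omega
  · intro S hS
    rw [Finset.mem_powersetCard] at hS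
    exact Finset.sdiff_sdiff_eq_self hS.1
  · intro T hT
    rw [Finset.mem_powersetCard] at hT
    exact Finset.sdiff_sdiff_eq_self hT.1
  · intro S hS
    rw [Finset.mem_powersetCard] at hS
    rw [← Finset.prod_sdiff hS.1, Finset.prod_inv_distrib]
    have hne : ∏ i ∈ Finset.Icc 1 m \ S, (lam - i + 1) ≠ 0 :=
      Finset.prod_ne_zero_iff.2 fun i _ => factor_ne_zero lam hlam i
    field_simp

lemma ratio_eq (lam : ℂ) (hlam : ∀ z : ℤ, lam ≠ (z : ℂ)) (j m : ℕ) (hjm : j ≤ m) :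
    cjm lam j m / dfac (lam - j) m
      = dfac lam j * (∑ T ∈ Finset.powersetCard j (Finset.Icc 1 m),
          ∏ i ∈ T, (lam - i + 1)⁻¹) / dfac (lam - m) j := by
  have h1 : dfac lam j * dfac (lam - j) m = dfac lam m * dfac (lam - m) j := by
    rw [← dfac_add, ← dfac_add, Nat.add_comm]
  have hne1 : dfac (lam - j) m ≠ 0 := dfac_ne_zero lam hlam j m
  have hne2 : dfac (lam - m) j ≠ 0 := dfac_ne_zero lam hlam m j
  rw [cjm_eq lam hlam j m hjm]
  rw [div_eq_div_iff hne1 hne2]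
  linear_combination -(∑ T ∈ Finset.powersetCard j (Finset.Icc 1 m),
          ∏ i ∈ T, (lam - i + 1)⁻¹) * h1

lemma esymm_le (b : ℕ → ℝ) (hb : ∀ i, 0 ≤ b i) (s : Finset ℕ) (j : ℕ) :
    ∑ T ∈ Finset.powersetCard j s, ∏ i ∈ T, b i ≤ (∑ i ∈ s, b i) ^ j := by
  classical
  induction j with
  | zero => simp
  | succ j ih =>
    have hsum0 : 0 ≤ ∑ i ∈ s, b i := Finset.sum_nonneg fun i _ => hb i
    have step : ∑ T ∈ Finset.powersetCard (j + 1) s, ∏ i ∈ T, b i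
        ≤ (∑ i ∈ s, b i) * ∑ T ∈ Finset.powersetCard j s, ∏ i ∈ T, b i := by
      set φ : Finset ℕ → ℕ × Finset ℕ := fun U =>
        if h : U.Nonempty then (U.min' h, U.erase (U.min' h)) else (0, ∅) with hφ
      have hval : ∀ U ∈ Finset.powersetCard (j + 1) s,
          ∏ i ∈ U, b i = b (φ U).1 * ∏ i ∈ (φ U).2, b i := by
        intro U hU
        rw [Finset.mem_powersetCard] at hU
        have hne : U.Nonempty := Finset.card_pos.1 (by omega)
        simp only [hφ, dif_pos hne]
        exact (Finset.mul_prod_erase U b (U.min'_mem hne)).symm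
      have hins : ∀ U ∈ Finset.powersetCard (j + 1) s, insert (φ U).1 (φ U).2 = U := by
        intro U hU
        rw [Finset.mem_powersetCard] at hU
        have hne : U.Nonempty := Finset.card_pos.1 (by omega)
        simp only [hφ, dif_pos hne]
        exact Finset.insert_erase (U.min'_mem hne)
      have hmem : ∀ U ∈ Finset.powersetCard (j + 1) s,
          φ U ∈ s ×ˢ Finset.powersetCard j s := by
        intro U hU
        have hU' := hU
        rw [Finset.mem_powersetCard] at hU'
        have hne : U.Nonempty := Finset.card_pos.1 (by omega)
        rw [Finset.mem_product]
        constructor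
        · simp only [hφ, dif_pos hne]
          exact hU'.1 (U.min'_mem hne)
        · simp only [hφ, dif_pos hne]
          rw [Finset.mem_powersetCard]
          exact ⟨(Finset.erase_subset _ _).trans hU'.1,
            by rw [Finset.card_erase_of_mem (U.min'_mem hne), hU'.2]; omega⟩
      calc ∑ T ∈ Finset.powersetCard (j + 1) s, ∏ i ∈ T, b i
          = ∑ U ∈ Finset.powersetCard (j + 1) s, b (φ U).1 * ∏ i ∈ (φ U).2, b i :=
            Finset.sum_congr rfl hval
        _ = ∑ p ∈ (Finset.powersetCard (j + 1) s).image φ, b p.1 * ∏ i ∈ p.2, b i := by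
            rw [Finset.sum_image]
            intro U hU V hV hUV
            rw [← hins U hU, ← hins V hV, hUV]
        _ ≤ ∑ p ∈ s ×ˢ Finset.powersetCard j s, b p.1 * ∏ i ∈ p.2, b i := by
            refine Finset.sum_le_sum_of_subset_of_nonneg ?_ ?_
            · intro p hp
              obtain ⟨U, hU, rfl⟩ := Finset.mem_image.1 hp
              exact hmem U hU
            · intro p _ _
              exact mul_nonneg (hb _) (Finset.prod_nonneg fun i _ => hb i)
        _ = (∑ i ∈ s, b i) * ∑ T ∈ Finset.powersetCard j s, ∏ i ∈ T, b i := by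
            rw [Finset.sum_product, Finset.sum_mul]
            exact Finset.sum_congr rfl fun i _ => by rw [Finset.mul_sum]
    calc ∑ T ∈ Finset.powersetCard (j + 1) s, ∏ i ∈ T, b i
        ≤ (∑ i ∈ s, b i) * ∑ T ∈ Finset.powersetCard j s, ∏ i ∈ T, b i := step
      _ ≤ (∑ i ∈ s, b i) * (∑ i ∈ s, b i) ^ j := mul_le_mul_of_nonneg_left ih hsum0
      _ = (∑ i ∈ s, b i) ^ (j + 1) := by ring

lemma sum_inv_sqrt_le (m : ℕ) :
    ∑ i ∈ Finset.Icc 1 m, (Real.sqrt i)⁻¹ ≤ 2 * Real.sqrt m := by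
  induction m with
  | zero => simp
  | succ m ih =>
    rw [Finset.sum_Icc_succ_top (by omega)]
    have h0 : (0:ℝ) ≤ m := Nat.cast_nonneg m
    have hs : Real.sqrt m * Real.sqrt m = (m:ℝ) := Real.mul_self_sqrt h0
    have hs1 : Real.sqrt ((m:ℝ) + 1) * Real.sqrt ((m:ℝ) + 1) = (m:ℝ) + 1 :=
      Real.mul_self_sqrt (by positivity)
    have hpos : 0 < Real.sqrt ((m:ℝ) + 1) := Real.sqrt_pos.2 (by positivity)
    have hcast : ((m + 1 : ℕ) : ℝ) = (m:ℝ) + 1 := by push_cast; ring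
    rw [hcast]
    have key : (Real.sqrt ((m:ℝ) + 1))⁻¹ ≤ 2 * Real.sqrt ((m:ℝ) + 1) - 2 * Real.sqrt m := by
      rw [inv_eq_one_div, div_le_iff₀ hpos]
      nlinarith [mul_self_nonneg (Real.sqrt ((m:ℝ)+1) - Real.sqrt m)]
    linarith

/-- For `λ ∉ ℤ` and fixed `j ≥ 1`, `c_j(λ,m)/[λ-j]_m → 0` as `m → ∞`. -/
theorem stmt7 (lam : ℂ) (hlam : ∀ z : ℤ, lam ≠ (z : ℂ)) (j : ℕ) (hj : 1 ≤ j) :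
    Filter.Tendsto (fun m => cjm lam j m / dfac (lam - j) m) Filter.atTop (nhds 0) := by
  classical
  obtain ⟨δ, hδ0, hδ⟩ : ∃ δ : ℝ, 0 < δ ∧ ∀ z : ℤ, δ ≤ ‖lam - z‖ := by
    refine ⟨min (1/2) (‖lam - round lam.re‖),
      lt_min (by norm_num) (norm_pos_iff.2 (sub_ne_zero.2 (hlam _))), fun z => ?_⟩
    rcases eq_or_ne z (round lam.re) with rfl | hz
    · exact min_le_right _ _
    · refine le_trans (min_le_left _ _) ?_
      have h1 : |lam.re - z| ≤ ‖lam - z‖ := by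
        have := Complex.abs_re_le_norm (lam - z)
        simpa using this
      have h2 : (1:ℝ) ≤ |((round lam.re - z : ℤ) : ℝ)| := by
        have : (1:ℤ) ≤ |round lam.re - z| := Int.one_le_abs (sub_ne_zero.2 (Ne.symm hz))
        exact_mod_cast this
      have h3 : |lam.re - round lam.re| ≤ 1/2 := abs_sub_round lam.re
      have h4 : |((round lam.re - z : ℤ) : ℝ)|
          ≤ |lam.re - z| + |lam.re - round lam.re| := by
        push_cast
        have : ((round lam.re : ℝ) - z) = (lam.re - z) - (lam.re - round lam.re) := by ring
        rw [this]
        exact abs_sub _ _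
      linarith
  set R : ℝ := ‖lam‖ with hR
  have hR0 : 0 ≤ R := norm_nonneg _
  set N0 : ℕ := ⌈(R + 2) ^ 2⌉₊ with hN0
  set A : ℝ := max (Real.sqrt N0 / δ) 1 with hA
  have hA1 : 1 ≤ A := le_max_right _ _
  have hA0 : 0 < A := lt_of_lt_of_le one_pos hA1
  have habs : ∀ i : ℕ, δ ≤ ‖lam - i + 1‖ := by
    intro i
    have h := hδ ((i : ℤ) - 1)
    have e : lam - (((i : ℤ) - 1 : ℤ) : ℂ) = lam - i + 1 := by push_cast; ring
    rwa [e] at h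
  -- pointwise bound  √i ≤ A * |λ - i + 1|
  have hAi : ∀ i : ℕ, 1 ≤ i → Real.sqrt i ≤ A * ‖lam - i + 1‖ := by
    intro i hi
    rcases le_or_gt i N0 with h | h
    · calc Real.sqrt i ≤ Real.sqrt N0 := Real.sqrt_le_sqrt (by exact_mod_cast h)
        _ = Real.sqrt N0 / δ * δ := (div_mul_cancel₀ _ (ne_of_gt hδ0)).symm
        _ ≤ A * ‖lam - i + 1‖ :=
            mul_le_mul (le_max_left _ _) (habs i) hδ0.le hA0.le
    · have hi2 : ((R + 2) ^ 2 : ℝ) ≤ i :=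
        le_trans (Nat.le_ceil _) (by exact_mod_cast h.le)
      have hsq : R + 2 ≤ Real.sqrt i := by
        rw [show (R + 2 : ℝ) = Real.sqrt ((R + 2) ^ 2) from (Real.sqrt_sq (by positivity)).symm]
        exact Real.sqrt_le_sqrt hi2
      have hlow : (i : ℝ) - 1 - R ≤ ‖lam - i + 1‖ := by
        have h1 : ‖(i : ℂ) - 1‖ - ‖lam‖ ≤ ‖(i : ℂ) - 1 - lam‖ := norm_sub_norm_le _ _
        have h2 : ‖(i : ℂ) - 1‖ = (i : ℝ) - 1 := by
          rw [show ((i : ℂ) - 1) = (((i : ℝ) - 1 : ℝ) : ℂ) by push_cast; ring,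
            Complex.norm_real]
          have hi' : (1:ℝ) ≤ (i : ℝ) := by exact_mod_cast hi
          exact abs_of_nonneg (by linarith)
        have h3 : ‖(i : ℂ) - 1 - lam‖ = ‖lam - i + 1‖ := by
          rw [show (i : ℂ) - 1 - lam = -(lam - i + 1) by ring, norm_neg]
        have h4 : ‖lam‖ = R := rfl
        rw [h2, h3, h4] at h1
        linarith
      have hii : Real.sqrt i ≤ (i : ℝ) - 1 - R := by
        have hs2 : Real.sqrt i * Real.sqrt i = (i : ℝ) :=
          Real.mul_self_sqrt (Nat.cast_nonneg i)
        nlinarith [Real.sqrt_nonneg (i : ℝ)]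
      calc Real.sqrt i ≤ ‖lam - i + 1‖ := le_trans hii hlow
        _ ≤ A * ‖lam - i + 1‖ :=
            le_mul_of_one_le_left (norm_nonneg _) hA1
  -- bound on the sum of inverse norms
  have hsumb : ∀ m : ℕ, ∑ i ∈ Finset.Icc 1 m, ‖(lam - i + 1)⁻¹‖
      ≤ 2 * A * Real.sqrt m := by
    intro m
    have h1 : ∀ i ∈ Finset.Icc 1 m, ‖(lam - i + 1)⁻¹‖ ≤ A * (Real.sqrt i)⁻¹ := by
      intro i hi
      rw [Finset.mem_Icc] at hi
      have hi1 : 1 ≤ i := hi.1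
      have hspos : 0 < Real.sqrt i := Real.sqrt_pos.2 (by exact_mod_cast hi1)
      have habspos : 0 < ‖lam - i + 1‖ := lt_of_lt_of_le hδ0 (habs i)
      rw [norm_inv, inv_eq_one_div, div_le_iff₀ habspos]
      rw [show A * (Real.sqrt i)⁻¹ * ‖lam - i + 1‖
          = A * ‖lam - i + 1‖ * (Real.sqrt i)⁻¹ by ring]
      rw [show (1:ℝ) = Real.sqrt i * (Real.sqrt i)⁻¹ from (mul_inv_cancel₀ hspos.ne').symm]
      exact mul_le_mul_of_nonneg_right (hAi i hi1) (inv_nonneg.2 hspos.le)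
    calc ∑ i ∈ Finset.Icc 1 m, ‖(lam - i + 1)⁻¹‖
        ≤ ∑ i ∈ Finset.Icc 1 m, A * (Real.sqrt i)⁻¹ := Finset.sum_le_sum h1
      _ = A * ∑ i ∈ Finset.Icc 1 m, (Real.sqrt i)⁻¹ := by rw [Finset.mul_sum]
      _ ≤ A * (2 * Real.sqrt m) :=
          mul_le_mul_of_nonneg_left (sum_inv_sqrt_le m) hA0.le
      _ = 2 * A * Real.sqrt m := by ring
  -- bound on E m
  set E : ℕ → ℂ := fun m => ∑ T ∈ Finset.powersetCard j (Finset.Icc 1 m),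
      ∏ i ∈ T, (lam - i + 1)⁻¹ with hE
  have hEb : ∀ m : ℕ, ‖E m‖ ≤ (2 * A * Real.sqrt m) ^ j := by
    intro m
    have h1 : ‖E m‖ ≤ ∑ T ∈ Finset.powersetCard j (Finset.Icc 1 m),
        ∏ i ∈ T, ‖(lam - i + 1)⁻¹‖ := by
      refine le_trans (norm_sum_le _ _) (Finset.sum_le_sum fun T _ => ?_)
      rw [norm_prod]
    have h2 := esymm_le (fun i => ‖(lam - i + 1)⁻¹‖) (fun i => norm_nonneg _)
      (Finset.Icc 1 m) j
    have h3 : (∑ i ∈ Finset.Icc 1 m, ‖(lam - i + 1)⁻¹‖) ^ j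
        ≤ (2 * A * Real.sqrt m) ^ j :=
      pow_le_pow_left₀ (Finset.sum_nonneg fun i _ => norm_nonneg _) (hsumb m) j
    exact le_trans h1 (le_trans h2 h3)
  -- lower bound on the denominator
  have hDb : ∀ m : ℕ, 2 * R ≤ (m : ℝ) → ((m : ℝ) / 2) ^ j ≤ ‖dfac (lam - m) j‖ := by
    intro m hm
    rw [dfac, norm_prod]
    have : ((m : ℝ) / 2) ^ j = ∏ _r ∈ Finset.range j, ((m : ℝ) / 2) := by
      rw [Finset.prod_const, Finset.card_range]
    rw [this]
    refine Finset.prod_le_prod (fun r _ => by positivity) fun r _ => ?_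
    have h1 : ‖(m : ℂ) + r‖ - ‖lam‖ ≤ ‖lam - (m : ℂ) - r‖ := by
      have := norm_sub_norm_le ((m : ℂ) + r) lam
      rw [show (m : ℂ) + r - lam = -(lam - m - r) by ring, norm_neg] at this
      exact this
    have h2 : ‖(m : ℂ) + r‖ = (m : ℝ) + r := by
      rw [show ((m : ℂ) + r) = (((m : ℝ) + r : ℝ) : ℂ) by push_cast; ring,
        Complex.norm_real]
      exact abs_of_nonneg (by positivity)
    have h3 : ‖lam‖ = R := rfl
    rw [h2, h3] at h1
    have : (m : ℝ) / 2 ≤ (m : ℝ) + r - R := by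
      have : (0:ℝ) ≤ r := Nat.cast_nonneg r
      linarith
    linarith
  -- assemble: eventually ‖f m‖ ≤ (‖dfac lam j‖ * (4 * A)) * (Real.sqrt m)⁻¹
  set C : ℝ := ‖dfac lam j‖ with hC
  have hC0 : 0 ≤ C := norm_nonneg _
  have hbound : ∀ᶠ m : ℕ in Filter.atTop,
      ‖cjm lam j m / dfac (lam - j) m‖ ≤ C * (4 * A) * (Real.sqrt m)⁻¹ := by
    have hev : ∀ᶠ m : ℕ in Filter.atTop,
        j ≤ m ∧ 2 * R ≤ (m : ℝ) ∧ ((4 * A) ^ 2 ≤ (m : ℝ)) ∧ 1 ≤ m := by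
      filter_upwards [Filter.eventually_ge_atTop (max j 1),
        Filter.eventually_ge_atTop (⌈max (2 * R) ((4 * A) ^ 2)⌉₊)] with m h1 h2
      have h3 : (max (2 * R) ((4 * A) ^ 2) : ℝ) ≤ m := le_trans (Nat.le_ceil _)
        (by exact_mod_cast h2)
      exact ⟨le_trans (le_max_left _ _) h1,
        le_trans (le_max_left _ _) h3, le_trans (le_max_right _ _) h3,
        le_trans (le_max_right _ _) h1⟩
    filter_upwards [hev] with m hm
    obtain ⟨hjm, hm2R, hm4A, hm1⟩ := hm
    have hmpos : (0:ℝ) < m := by exact_mod_cast hm1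
    have hspos : 0 < Real.sqrt m := Real.sqrt_pos.2 hmpos
    have hdenpos : (0:ℝ) < ((m : ℝ) / 2) ^ j := by positivity
    rw [ratio_eq lam hlam j m hjm, norm_div, norm_mul]
    have step1 : C * ‖E m‖ / ‖dfac (lam - m) j‖
        ≤ C * (2 * A * Real.sqrt m) ^ j / (((m : ℝ) / 2) ^ j) := by
      refine div_le_div₀ (by positivity) ?_ hdenpos (hDb m hm2R)
      exact mul_le_mul_of_nonneg_left (hEb m) hC0
    have step2 : C * (2 * A * Real.sqrt m) ^ j / (((m : ℝ) / 2) ^ j)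
        = C * (4 * A / Real.sqrt m) ^ j := by
      rw [mul_div_assoc, ← div_pow]
      congr 2
      rw [div_eq_div_iff (by positivity) hspos.ne']
      nlinarith [Real.mul_self_sqrt hmpos.le]
    have step3 : (4 * A / Real.sqrt m) ^ j ≤ 4 * A / Real.sqrt m := by
      have hb0 : 0 ≤ 4 * A / Real.sqrt m := by positivity
      have hb1 : 4 * A / Real.sqrt m ≤ 1 := by
        rw [div_le_one hspos]
        calc 4 * A = Real.sqrt ((4 * A) ^ 2) := (Real.sqrt_sq (by positivity)).symm
          _ ≤ Real.sqrt m := Real.sqrt_le_sqrt hm4A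
      calc (4 * A / Real.sqrt m) ^ j ≤ (4 * A / Real.sqrt m) ^ 1 :=
            pow_le_pow_of_le_one hb0 hb1 hj
        _ = 4 * A / Real.sqrt m := pow_one _
    calc C * ‖E m‖ / ‖dfac (lam - m) j‖
        ≤ C * (4 * A / Real.sqrt m) ^ j := by rw [← step2]; exact step1
      _ ≤ C * (4 * A / Real.sqrt m) := mul_le_mul_of_nonneg_left step3 hC0
      _ = C * (4 * A) * (Real.sqrt m)⁻¹ := by rw [div_eq_mul_inv]; ring
  -- conclude
  have hsqrt : Filter.Tendsto (fun m : ℕ => Real.sqrt m) Filter.atTop Filter.atTop := by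
    apply Filter.tendsto_atTop_atTop.2
    intro b
    refine ⟨⌈b * b⌉₊, fun m hm => ?_⟩
    rcases le_or_gt b 0 with hb | hb
    · exact hb.trans (Real.sqrt_nonneg _)
    · have h1 : b * b ≤ (m : ℝ) := le_trans (Nat.le_ceil _) (by exact_mod_cast hm)
      calc b = Real.sqrt (b * b) := (Real.sqrt_mul_self hb.le).symm
        _ ≤ Real.sqrt m := Real.sqrt_le_sqrt h1
  have hg : Filter.Tendsto (fun m : ℕ => C * (4 * A) * (Real.sqrt m)⁻¹)
      Filter.atTop (nhds 0) := by
    have := (hsqrt.inv_tendsto_atTop).const_mul (C * (4 * A))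
    simpa using this
  rw [show (0 : ℂ) = 0 from rfl]
  refine squeeze_zero_norm' hbound hg
end

section
/- Let A ∈ ℤ^{d×n} of rank d whose columns span a strongly convex cone, and suppose (1,…,1) is not in the rational rowspan of A. Let B ∈ ℤ^{(n+1)×(n-d)} be a Gale dual of ρ(A) (its columns form a basis of ker_ℤ(ρ(A))) with rows b₀,…,bₙ. Then b₀ ≠ 0, and for any σ ⊂ {1,…,n} of cardinality d+1 such that {b_i : i ∉ σ} is linearly independent, there exist w ∈ ℝ_{>0}ⁿ and positive reals λ_i (i ∉ σ) with Σ_{i=1}^{n} w_i b_i = Σ_{i ∉ σ} λ_i b_i; in particular (0,w)·B lies in the interior of the cone K_σ = {Σ_{i∉σ} λ_i b_i : λ_i ≥ 0}. -/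
/-!
If b₀ = 0, every integer vector in ker ρ(A) has first coordinate 0. Clearing denominators, a
rational vector v ∈ ker A lifts to (-Σ vᵢ, v) ∈ ker ρ(A), so every vector of ker A has coordinate
sum 0, and by duality (1,…,1) lies in the rational row span of A.

For the second claim take h with w := hᵀA > 0. Then (0, w) = (0, h)ᵀρ(A) is orthogonal to
ker ρ(A), so Σ wᵢ bᵢ = (0, w)·B = 0; adding Σ_{i∉σ} bᵢ to both sides gives the positive
representation.
-/

/-- The homogenization `ρ(A)` of `A`: a column of zeros is attached to the left of `A`
and a row of ones on top. -/
def rhoA {d n : ℕ} (A : Matrix (Fin d) (Fin n) ℤ) : Matrix (Fin (d + 1)) (Fin (n + 1)) ℤ :=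
  Matrix.of (Fin.cons (fun _ => (1 : ℤ)) (fun i' => Fin.cons (0 : ℤ) (A i')))

open Matrix

theorem Matrix.exists_vecMul_eq_of_forall_mulVec_eq_zero {K m n : Type*} [Field K] [Fintype m]
    [Fintype n] (M : Matrix m n K) (x : n → K)
    (hx : ∀ v, M *ᵥ v = 0 → x ⬝ᵥ v = 0) : ∃ c, c ᵥ* M = x := by
  classical
  obtain ⟨g, hg⟩ : dotProductEquiv K n x ∈ LinearMap.range M.mulVecLin.dualMap := by
    rw [LinearMap.range_dualMap_eq_dualAnnihilator_ker]
    exact (Submodule.mem_dualAnnihilator _).2 hx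
  refine ⟨(dotProductEquiv K m).symm g, (dotProductEquiv K n).injective (LinearMap.ext fun v => ?_)⟩
  rw [← hg, dotProductEquiv_apply_apply, ← dotProduct_mulVec]
  exact congrArg (· (M *ᵥ v)) ((dotProductEquiv K m).apply_symm_apply g)

theorem Matrix.map_intCast_mulVec {R m n : Type*} [Ring R] [Fintype n] (A : Matrix m n ℤ)
    (v : n → ℤ) : (A.map (↑) *ᵥ ((↑) ∘ v) : m → R) = (↑) ∘ (A *ᵥ v) :=
  funext fun i => (RingHom.map_mulVec (Int.castRingHom R) A v i).symm

theorem Matrix.exists_int_mulVec_eq_zero {m n : Type*} [Fintype n] (A : Matrix m n ℤ) (v : n → ℚ)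
    (hv : A.map (↑) *ᵥ v = 0) :
    ∃ u : n → ℤ, A *ᵥ u = 0 ∧ ∃ N : ℤ, N ≠ 0 ∧ ((↑) ∘ u : n → ℚ) = (N : ℚ) • v := by
  obtain ⟨⟨N, hN⟩, hu⟩ := IsLocalization.exist_integer_multiples_of_finite (nonZeroDivisors ℤ) v
  choose u hu using hu
  have huv : ((↑) ∘ u : n → ℚ) = (N : ℚ) • v := funext fun j => by simpa using hu j
  refine ⟨u, funext fun i => Int.cast_injective (α := ℚ) ?_, N, nonZeroDivisors.ne_zero hN, huv⟩
  have hi := congrFun (A.map_intCast_mulVec (R := ℚ) u) i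
  rw [huv, mulVec_smul, hv] at hi
  simpa using hi.symm

theorem Matrix.vecMul_dotProduct_eq_zero_of_mulVec_eq_zero {R m n : Type*} [CommRing R]
    [Fintype m] [Fintype n] (A : Matrix m n ℤ) {v : n → ℤ} (hv : A *ᵥ v = 0) (h : m → R) :
    (h ᵥ* A.map (↑)) ⬝ᵥ ((↑) ∘ v) = 0 := by
  rw [← dotProduct_mulVec, map_intCast_mulVec, hv]
  simp

theorem Finset.exists_pos_sum_mul_eq_sum_compl {ι κ R : Type*} [Fintype ι] [DecidableEq ι]
    [CommSemiring R] [PartialOrder R] [IsStrictOrderedRing R] (b : ι → κ → R) {w : ι → R}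
    (hw : ∀ i, 0 < w i) (hwb : ∀ k, ∑ i, w i * b i k = 0) (s : Finset ι) :
    ∃ w' : ι → R, (∀ i, 0 < w' i) ∧ ∃ lam : ι → R, (∀ i ∉ s, 0 < lam i) ∧
      ∀ k, ∑ i, w' i * b i k = ∑ i ∈ sᶜ, lam i * b i k := by
  refine ⟨fun i => w i + if i ∈ s then 0 else 1, fun i => ?_, fun _ => 1, fun _ _ => one_pos,
    fun k => ?_⟩
  · have := hw i
    dsimp only
    split_ifs <;> positivity
  · simp [add_mul, Finset.sum_add_distrib, hwb, ite_mul, Finset.sum_ite, Finset.filter_not,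
      ← Finset.compl_eq_univ_sdiff]

theorem rhoA_mulVec_eq_zero_iff {d n : ℕ} (A : Matrix (Fin d) (Fin n) ℤ) (u : Fin (n + 1) → ℤ) :
    rhoA A *ᵥ u = 0 ↔ ∑ i, u i = 0 ∧ A *ᵥ Fin.tail u = 0 := by
  simp [funext_iff, Fin.forall_fin_succ, rhoA, mulVec, dotProduct, Fin.sum_univ_succ, Fin.tail]

theorem sum_eq_zero_of_rhoA_ker_head_eq_zero {d n : ℕ} {A : Matrix (Fin d) (Fin n) ℤ}
    (hhead : ∀ u, rhoA A *ᵥ u = 0 → u 0 = 0) {v : Fin n → ℚ} (hv : A.map (↑) *ᵥ v = 0) :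
    ∑ j, v j = 0 := by
  obtain ⟨u, hu, N, hN, huv⟩ := A.exists_int_mulVec_eq_zero v hv
  have hsum : ∑ j, u j = 0 := by
    simpa using hhead (Fin.cons (-∑ j, u j) u)
      ((rhoA_mulVec_eq_zero_iff A _).2 ⟨by simp [Fin.sum_univ_succ], hu⟩)
  have : (N : ℚ) * ∑ j, v j = 0 := by
    have huv' : ∀ j, (u j : ℚ) = N * v j := fun j => congrFun huv j
    rw [Finset.mul_sum]
    simp only [← huv']
    exact_mod_cast hsum
  exact (mul_eq_zero.1 this).resolve_left (by exact_mod_cast hN)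

theorem stmt9_general (d n : ℕ) (A : Matrix (Fin d) (Fin n) ℤ)
    (hconv : ∃ h : Fin d → ℝ, ∀ j, 0 < ∑ i, h i * (A i j : ℝ))
    (hrow : ¬ ∃ c : Fin d → ℚ, ∀ j, ∑ i, c i * (A i j : ℚ) = 1)
    (B : Matrix (Fin (n + 1)) (Fin (n - d)) ℤ)
    (hker : ∀ u : Fin (n + 1) → ℤ, (rhoA A).mulVec u = 0 ↔
      ∃ c : Fin (n - d) → ℤ, u = fun i => ∑ k, B i k * c k) :
    (∃ k, B 0 k ≠ 0) ∧
    ∀ σ : Finset (Fin n), σ.card = d + 1 →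
      LinearIndependent ℝ (fun i : {i : Fin n // i ∉ σ} => fun k => (B i.1.succ k : ℝ)) →
      ∃ w : Fin n → ℝ, (∀ i, 0 < w i) ∧
        ∃ lam : Fin n → ℝ, (∀ i ∉ σ, 0 < lam i) ∧
          ∀ k, ∑ i, w i * (B i.succ k : ℝ) = ∑ i ∈ σᶜ, lam i * (B i.succ k : ℝ) := by
  refine ⟨?_, fun σ _ _ => ?_⟩
  · by_contra! hb0
    have hhead : ∀ u, rhoA A *ᵥ u = 0 → u 0 = 0 := fun u hu => by
      obtain ⟨c, rfl⟩ := (hker u).1 hu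
      simp [hb0]
    obtain ⟨c, hc⟩ := (A.map ((↑) : ℤ → ℚ)).exists_vecMul_eq_of_forall_mulVec_eq_zero 1
      fun v hv => by rw [one_dotProduct]; exact sum_eq_zero_of_rhoA_ker_head_eq_zero hhead hv
    exact hrow ⟨c, congrFun hc⟩
  · obtain ⟨h, hh⟩ := hconv
    have hcol : ∀ k, A *ᵥ (fun j => B j.succ k) = 0 := fun k =>
      ((rhoA_mulVec_eq_zero_iff A _).1 ((hker fun i => B i k).2
        ⟨Pi.single k 1, funext fun i => by simp [Pi.single_apply]⟩)).2
    exact Finset.exists_pos_sum_mul_eq_sum_compl _ hh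
      (fun k => A.vecMul_dotProduct_eq_zero_of_mulVec_eq_zero (hcol k) h) σ

/-- Let `A` be of rank `d` with columns spanning a strongly convex cone, and suppose
`(1,…,1)` is not in the rational rowspan of `A`.  Let `B` be a Gale dual of `ρ(A)`
(its columns form a `ℤ`-basis of `ker_ℤ(ρ(A))`) with rows `b₀,…,bₙ`.  Then `b₀ ≠ 0`,
and for any `σ ⊂ {1,…,n}` of cardinality `d+1` with `{bᵢ : i ∉ σ}` linearly
independent, there exist `w ∈ ℝ_{>0}ⁿ` and positive `λᵢ` (`i ∉ σ`) with
`Σᵢ wᵢ bᵢ = Σ_{i∉σ} λᵢ bᵢ`; in particular `(0,w)·B` lies in the interior of the cone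
`K_σ`. -/
theorem stmt9 (d n : ℕ) (A : Matrix (Fin d) (Fin n) ℤ)
    (hrank : (A.map ((↑) : ℤ → ℚ)).rank = d)
    (hconv : ∃ h : Fin d → ℝ, ∀ j, 0 < ∑ i, h i * (A i j : ℝ))
    (hrow : ¬ ∃ c : Fin d → ℚ, ∀ j, ∑ i, c i * (A i j : ℚ) = 1)
    (B : Matrix (Fin (n + 1)) (Fin (n - d)) ℤ)
    (hker : ∀ u : Fin (n + 1) → ℤ, (rhoA A).mulVec u = 0 ↔
      ∃ c : Fin (n - d) → ℤ, u = fun i => ∑ k, B i k * c k)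
    (hindB : ∀ c : Fin (n - d) → ℤ, (∀ i, ∑ k, B i k * c k = 0) → c = 0) :
    (∃ k, B 0 k ≠ 0) ∧
    ∀ σ : Finset (Fin n), σ.card = d + 1 →
      LinearIndependent ℝ (fun i : {i : Fin n // i ∉ σ} => fun k => (B i.1.succ k : ℝ)) →
      ∃ w : Fin n → ℝ, (∀ i, 0 < w i) ∧
        ∃ lam : Fin n → ℝ, (∀ i ∉ σ, 0 < lam i) ∧
          ∀ k, ∑ i, w i * (B i.succ k : ℝ) = ∑ i ∈ σᶜ, lam i * (B i.succ k : ℝ) :=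
  stmt9_general d n A hconv hrow B hker
end

section
/- Let A ∈ ℤ^{d×n} with ℤ-span of columns equal to ℤ^d, β ∈ ℂ^d, and v ∈ (ℂ ∖ ℤ_{<0})ⁿ with A·v = β. Then for every u ∈ ker_ℤ(A) the coefficient [v]_{u₋}/[u+v]_{u₊} is well defined (the denominator is nonzero), where [v]_{u₋} = ∏_{u_i<0} ∏_{j=1}^{-u_i}(v_i - j + 1) and [u+v]_{u₊} = ∏_{u_i>0} ∏_{j=1}^{u_i}(v_i + j), and the formal series φ_v = Σ_{u ∈ ker_ℤ(A)} ([v]_{u₋}/[u+v]_{u₊}) x^{u+v} is annihilated by every toric operator ∂^{u₊} − ∂^{u₋} (u ∈ ker_ℤ(A)) and by every Euler operator Σ_j a_{ij} x_j ∂_j − β_i. -/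
open scoped Classical

/-!
The coefficient factors over the coordinates, `hypCoeff v u = ∏ⱼ F(vⱼ, uⱼ)` with
`F(s, c+1) · (s + c + 1) = F(s, c)`, where `s ∉ ℤ_{<0}` is what allows dividing by `s + c + 1`
for `c ≥ 0`. Iterating, applying `∂^a` to the monomial `x^{v+w+a}` turns its coefficient back into
`hypCoeff v w`, so both sides of the toric equation at `x^{v+w}` equal `hypCoeff v w` or both
vanish, since `w + u₊` and `w + u₋` differ by `u ∈ ker A`. The Euler equation holds termwise
because `A u = 0` on the support of `φ_v`.
-/

/-- The "falling factorial" scalar `∂^a x^s = fallP s a · x^{s-a}`: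
`fallP s a = ∏ⱼ ∏_{l=0}^{aⱼ-1} (sⱼ - l)`. -/
noncomputable def fallP {n : ℕ} (s : Fin n → ℂ) (a : Fin n → ℕ) : ℂ :=
  ∏ j, ∏ l ∈ Finset.range (a j), (s j - l)

/-- The positive part `u₊` of `u ∈ ℤⁿ`, as an integer vector. -/
def uposZ {n : ℕ} (u : Fin n → ℤ) : Fin n → ℤ := fun j => max (u j) 0

/-- The negative part `u₋` of `u ∈ ℤⁿ`, as an integer vector. -/
def unegZ {n : ℕ} (u : Fin n → ℤ) : Fin n → ℤ := fun j => max (-u j) 0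

/-- The positive part `u₊` of `u ∈ ℤⁿ`, as a natural-number vector. -/
def uposN {n : ℕ} (u : Fin n → ℤ) : Fin n → ℕ := fun j => (u j).toNat

/-- The negative part `u₋` of `u ∈ ℤⁿ`, as a natural-number vector. -/
def unegN {n : ℕ} (u : Fin n → ℤ) : Fin n → ℕ := fun j => (-u j).toNat

/-- The coefficient `[v]_{u₋}/[u+v]_{u₊}` of `x^{v+u}` in the series `φ_v`, where
`[v]_{u₋} = ∏_{uᵢ<0} ∏_{j=1}^{-uᵢ} (vᵢ - j + 1)` and
`[u+v]_{u₊} = ∏_{uᵢ>0} ∏_{j=1}^{uᵢ} (vᵢ + j)`. -/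
noncomputable def hypCoeff {n : ℕ} (v : Fin n → ℂ) (u : Fin n → ℤ) : ℂ :=
  (∏ j, ∏ l ∈ Finset.range (unegN u j), (v j - l)) /
  (∏ j, ∏ l ∈ Finset.range (uposN u j), (v j + (l + 1)))

/-- The coefficient function of the formal series
`φ_v = Σ_{u ∈ ker_ℤ A} ([v]_{u₋}/[u+v]_{u₊}) x^{v+u}`: the coefficient of `x^{v+u}`. -/
noncomputable def phiCoeff {d n : ℕ} (A : Matrix (Fin d) (Fin n) ℤ) (v : Fin n → ℂ)
    (u : Fin n → ℤ) : ℂ :=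
  if A.mulVec u = 0 then hypCoeff v u else 0

noncomputable def hypFactor (s : ℂ) (c : ℤ) : ℂ :=
  (∏ l ∈ Finset.range (-c).toNat, (s - l)) / ∏ l ∈ Finset.range c.toNat, (s + (l + 1))

theorem add_natCast_add_one_ne_zero {s : ℂ} (hs : ¬ ∃ k : ℤ, k < 0 ∧ s = (k : ℂ)) (m : ℕ) :
    s + ((m : ℂ) + 1) ≠ 0 := fun h =>
  hs ⟨-(m + 1), by omega, by push_cast; linear_combination h⟩

theorem prod_range_add_natCast_add_one_ne_zero {s : ℂ} (hs : ¬ ∃ k : ℤ, k < 0 ∧ s = (k : ℂ))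
    (m : ℕ) : ∏ l ∈ Finset.range m, (s + ((l : ℂ) + 1)) ≠ 0 :=
  Finset.prod_ne_zero_iff.2 fun l _ => add_natCast_add_one_ne_zero hs l

theorem hypFactor_add_one_mul {s : ℂ} (hs : ¬ ∃ k : ℤ, k < 0 ∧ s = (k : ℂ)) (b : ℤ) :
    hypFactor s (b + 1) * (s + ((b : ℂ) + 1)) = hypFactor s b := by
  rcases le_or_gt 0 b with hb | hb
  · obtain ⟨m, rfl⟩ := Int.eq_ofNat_of_zero_le hb
    have hpos : ((m : ℤ) + 1).toNat = m + 1 := by omega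
    have hneg : (-((m : ℤ) + 1)).toNat = 0 := by omega
    have hneg' : (-(m : ℤ)).toNat = 0 := by omega
    have hm := add_natCast_add_one_ne_zero hs m
    simp only [hypFactor, hpos, hneg, hneg', Int.toNat_natCast, Finset.prod_range_succ,
      Finset.range_zero, Finset.prod_empty, Int.cast_natCast]
    field_simp
  · obtain ⟨m, rfl⟩ : ∃ m : ℕ, b = -(m + 1) := ⟨(-b - 1).toNat, by omega⟩
    have hpos : (-((m : ℤ) + 1) + 1).toNat = 0 := by omega
    have hpos' : (-((m : ℤ) + 1)).toNat = 0 := by omega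
    have hneg : (-(-((m : ℤ) + 1) + 1)).toNat = m := by omega
    have hneg' : (-(-((m : ℤ) + 1))).toNat = m + 1 := by omega
    simp only [hypFactor, hpos, hpos', hneg, hneg', Finset.prod_range_succ, Finset.range_zero,
      Finset.prod_empty, div_one]
    push_cast
    ring

theorem hypFactor_add_natCast_mul_prod_range_sub {s : ℂ}
    (hs : ¬ ∃ k : ℤ, k < 0 ∧ s = (k : ℂ)) (c : ℤ) (a : ℕ) :
    hypFactor s (c + a) * ∏ l ∈ Finset.range a, (s + ((c + a : ℤ) : ℂ) - l) =
      hypFactor s c := by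
  induction a with
  | zero => simp
  | succ a ih =>
    have hshift : ∀ l : ℕ,
        s + ((c + (a + 1 : ℕ) : ℤ) : ℂ) - (l + 1 : ℕ) = s + ((c + a : ℤ) : ℂ) - l :=
      fun l => by push_cast; ring
    rw [Finset.prod_range_succ', ← ih, ← hypFactor_add_one_mul hs (c + a)]
    simp only [hshift]
    rw [Nat.cast_succ, ← add_assoc]
    push_cast
    ring

theorem hypCoeff_eq_prod_hypFactor {n : ℕ} (v : Fin n → ℂ) (u : Fin n → ℤ) :
    hypCoeff v u = ∏ j, hypFactor (v j) (u j) :=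
  (Finset.prod_div_distrib ..).symm

theorem hypCoeff_add_mul_fallP {n : ℕ} {v : Fin n → ℂ}
    (hv : ∀ j, ¬ ∃ k : ℤ, k < 0 ∧ v j = (k : ℂ)) (w : Fin n → ℤ) (a : Fin n → ℕ) :
    hypCoeff v (w + fun j => (a j : ℤ)) * fallP (fun j => v j + ((w j + a j : ℤ) : ℂ)) a =
      hypCoeff v w := by
  simp only [hypCoeff_eq_prod_hypFactor, fallP, ← Finset.prod_mul_distrib]
  exact Finset.prod_congr rfl fun j _ =>
    hypFactor_add_natCast_mul_prod_range_sub (hv j) (w j) (a j)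

theorem phiCoeff_add_mul_fallP {d n : ℕ} (A : Matrix (Fin d) (Fin n) ℤ) {v : Fin n → ℂ}
    (hv : ∀ j, ¬ ∃ k : ℤ, k < 0 ∧ v j = (k : ℂ)) (w : Fin n → ℤ) (a : Fin n → ℕ) :
    phiCoeff A v (w + fun j => (a j : ℤ)) * fallP (fun j => v j + ((w j + a j : ℤ) : ℂ)) a =
      if A.mulVec (w + fun j => (a j : ℤ)) = 0 then hypCoeff v w else 0 := by
  unfold phiCoeff
  split_ifs
  · exact hypCoeff_add_mul_fallP hv w a
  · exact zero_mul _

theorem uposZ_eq_natCast {n : ℕ} (u : Fin n → ℤ) : uposZ u = fun j => (uposN u j : ℤ) := by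
  funext j
  simp only [uposZ, uposN]
  omega

theorem unegZ_eq_natCast {n : ℕ} (u : Fin n → ℤ) : unegZ u = fun j => (unegN u j : ℤ) := by
  funext j
  simp only [unegZ, unegN]
  omega

theorem uposZ_eq_unegZ_add {n : ℕ} (u : Fin n → ℤ) : uposZ u = unegZ u + u := by
  funext j
  simp only [uposZ, unegZ, Pi.add_apply]
  omega

-- Both sides are the coefficients of `x^{v+w}` in `∂^{u₊} φ_v` and `∂^{u₋} φ_v`.
theorem phiCoeff_toric {d n : ℕ} (A : Matrix (Fin d) (Fin n) ℤ) {v : Fin n → ℂ}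
    (hv : ∀ j, ¬ ∃ k : ℤ, k < 0 ∧ v j = (k : ℂ)) {u : Fin n → ℤ} (hu : A.mulVec u = 0)
    (w : Fin n → ℤ) :
    phiCoeff A v (w + uposZ u) *
        fallP (fun j => v j + ((w j + uposZ u j : ℤ) : ℂ)) (uposN u) =
      phiCoeff A v (w + unegZ u) *
        fallP (fun j => v j + ((w j + unegZ u j : ℤ) : ℂ)) (unegN u) := by
  have hker : A.mulVec (w + uposZ u) = A.mulVec (w + unegZ u) := by
    rw [uposZ_eq_unegZ_add, ← add_assoc, Matrix.mulVec_add _ _ u, hu, add_zero]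
  rw [uposZ_eq_natCast, unegZ_eq_natCast] at hker ⊢
  rw [phiCoeff_add_mul_fallP A hv, phiCoeff_add_mul_fallP A hv, hker]

theorem mulVec_eq_zero_of_phiCoeff_ne_zero {d n : ℕ} {A : Matrix (Fin d) (Fin n) ℤ}
    {v : Fin n → ℂ} {u : Fin n → ℤ} (h : phiCoeff A v u ≠ 0) : A.mulVec u = 0 := by
  by_contra hu
  exact h (if_neg hu)

theorem sum_intCast_mul_add_of_mulVec_eq_zero {d n : ℕ} {A : Matrix (Fin d) (Fin n) ℤ}
    {u : Fin n → ℤ} (hu : A.mulVec u = 0) (i : Fin d) (v : Fin n → ℂ) :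
    ∑ j, (A i j : ℂ) * (v j + (u j : ℂ)) = ∑ j, (A i j : ℂ) * v j := by
  have hrow : ∑ j, (A i j : ℂ) * (u j : ℂ) = 0 := by
    exact_mod_cast congrFun hu i
  simp only [mul_add, Finset.sum_add_distrib, hrow, add_zero]

theorem stmt13_general (d n : ℕ) (A : Matrix (Fin d) (Fin n) ℤ)
    (β : Fin d → ℂ) (v : Fin n → ℂ)
    (hv : ∀ j, ¬ ∃ k : ℤ, k < 0 ∧ v j = (k : ℂ))
    (hAv : ∀ i, ∑ j, (A i j : ℂ) * v j = β i) :
    (∀ u : Fin n → ℤ,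
      (∏ j, ∏ l ∈ Finset.range (uposN u j), (v j + (l + 1))) ≠ 0) ∧
    (∀ u : Fin n → ℤ, A.mulVec u = 0 → ∀ w : Fin n → ℤ,
      phiCoeff A v (w + uposZ u) *
          fallP (fun j => v j + ((w j + uposZ u j : ℤ) : ℂ)) (uposN u)
        = phiCoeff A v (w + unegZ u) *
          fallP (fun j => v j + ((w j + unegZ u j : ℤ) : ℂ)) (unegN u)) ∧
    (∀ i : Fin d, ∀ u : Fin n → ℤ, phiCoeff A v u ≠ 0 →
      ∑ j, (A i j : ℂ) * (v j + (u j : ℂ)) = β i) :=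
  ⟨fun u => Finset.prod_ne_zero_iff.2 fun j _ =>
      prod_range_add_natCast_add_one_ne_zero (hv j) (uposN u j),
    fun _ hu w => phiCoeff_toric A hv hu w,
    fun i _ h => (sum_intCast_mul_add_of_mulVec_eq_zero
      (mulVec_eq_zero_of_phiCoeff_ne_zero h) i v).trans (hAv i)⟩

/-- For `v ∈ (ℂ∖ℤ_{<0})ⁿ` with `A·v = β`, the coefficients of `φ_v` are well defined
(denominators are nonzero), and `φ_v` is annihilated by every toric operator
`∂^{u₊} − ∂^{u₋}` (`u ∈ ker_ℤ A`, expressed by matching the coefficient of each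
monomial `x^{v+w}`) and by every Euler operator `Σⱼ aᵢⱼ xⱼ∂ⱼ − βᵢ` (expressed
termwise). -/
theorem stmt13 (d n : ℕ) (A : Matrix (Fin d) (Fin n) ℤ)
    (hspan : ∀ z : Fin d → ℤ, ∃ c : Fin n → ℤ, A.mulVec c = z)
    (β : Fin d → ℂ) (v : Fin n → ℂ)
    (hv : ∀ j, ¬ ∃ k : ℤ, k < 0 ∧ v j = (k : ℂ))
    (hAv : ∀ i, ∑ j, (A i j : ℂ) * v j = β i) :
    (∀ u : Fin n → ℤ,
      (∏ j, ∏ l ∈ Finset.range (uposN u j), (v j + (l + 1))) ≠ 0) ∧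
    (∀ u : Fin n → ℤ, A.mulVec u = 0 → ∀ w : Fin n → ℤ,
      phiCoeff A v (w + uposZ u) *
          fallP (fun j => v j + ((w j + uposZ u j : ℤ) : ℂ)) (uposN u)
        = phiCoeff A v (w + unegZ u) *
          fallP (fun j => v j + ((w j + unegZ u j : ℤ) : ℂ)) (unegN u)) ∧
    (∀ i : Fin d, ∀ u : Fin n → ℤ, phiCoeff A v u ≠ 0 →
      ∑ j, (A i j : ℂ) * (v j + (u j : ℂ)) = β i) :=
  stmt13_general d n A β v hv hAv
end

section
/- Let v ∈ ℂⁿ with A·v = β, and suppose G = Σ λ_{ν} x^{ν} is a formal logarithm-free series solution of H_A(β) (supported on v + ker_ℤ(A)). If x^{ν} appears in G with λ_{ν} ≠ 0, then ν has minimal negative support: there is no u ∈ ker_ℤ(A) with nsup(ν+u) strictly contained in nsup(ν), where nsup(w) = {i : w_i ∈ ℤ_{<0}}. -/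
open scoped Classical

/-- The negative support of a vector: the set of indices at which it is a negative
integer. -/
def nsup {n : ℕ} (s : Fin n → ℂ) : Set (Fin n) := {i | ∃ k : ℤ, k < 0 ∧ s i = (k : ℂ)}

/-!
Apply the toric relation for `u'` at the exponent `ν = v + u`; it reads
`λ_{ν+u'} [ν+u']_{u'₊} = λ_ν [ν]_{u'₋}`. An index `i ∈ nsup ν \ nsup (ν+u')` makes
`ν_i + u'_i` a natural number below `u'_i`, so the left falling factorial vanishes, while
`nsup (ν+u') ⊆ nsup ν` keeps every factor `ν_j - l` (`l < -u'_j`) of the right one nonzero.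
Hence `λ_ν = 0`.
-/

section NegativeSupport

variable {n : ℕ}

theorem fallP_eq_zero_iff {s : Fin n → ℂ} {a : Fin n → ℕ} :
    fallP s a = 0 ↔ ∃ j, ∃ l < a j, s j = l := by
  simp [fallP, Finset.prod_eq_zero_iff, sub_eq_zero]

theorem uposZ_sub_unegZ (u : Fin n → ℤ) : uposZ u - unegZ u = u := by
  funext j
  simp only [Pi.sub_apply, uposZ, unegZ]
  omega

theorem sub_unegZ_add_uposZ (w u : Fin n → ℤ) : w - unegZ u + uposZ u = w + u := by
  rw [sub_add_eq_add_sub, add_sub_assoc, uposZ_sub_unegZ]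

theorem fallP_unegN_ne_zero {s : Fin n → ℂ} {u : Fin n → ℤ}
    (h : nsup (fun j => s j + u j) ⊆ nsup s) : fallP s (unegN u) ≠ 0 := by
  intro hzero
  obtain ⟨j, l, hl, hsj⟩ := fallP_eq_zero_iff.mp hzero
  have hlu : (l : ℤ) + u j < 0 := by
    simp only [unegN] at hl
    omega
  have hj : s j + u j = (((l : ℤ) + u j : ℤ) : ℂ) := by rw [hsj]; push_cast; ring
  obtain ⟨m, hm, hsm⟩ := @h j ⟨_, hlu, hj⟩
  have hlm : ((l : ℤ) : ℂ) = (m : ℂ) := by rw [← hsm, hsj, Int.cast_natCast]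
  have : (l : ℤ) = m := by exact_mod_cast hlm
  omega

theorem fallP_uposN_eq_zero {s : Fin n → ℂ} {u : Fin n → ℤ}
    (h : ¬ nsup s ⊆ nsup (fun j => s j + u j)) :
    fallP (fun j => s j + u j) (uposN u) = 0 := by
  obtain ⟨i, ⟨k, hk, hsi⟩, hi⟩ := Set.not_subset.mp h
  have hsi_shift : s i + u i = ((k + u i : ℤ) : ℂ) := by rw [hsi]; push_cast; ring
  have hnonneg : 0 ≤ k + u i := by
    by_contra hneg
    exact hi ⟨k + u i, by omega, hsi_shift⟩
  refine fallP_eq_zero_iff.mpr ⟨i, (k + u i).toNat, by simp only [uposN]; omega, ?_⟩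
  rw [hsi_shift, ← Int.cast_natCast, Int.toNat_of_nonneg hnonneg]

end NegativeSupport

theorem stmt14_general (d n : ℕ) (A : Matrix (Fin d) (Fin n) ℤ) (v : Fin n → ℂ)
    (lam : (Fin n → ℤ) → ℂ)
    (htoric : ∀ u : Fin n → ℤ, A.mulVec u = 0 → ∀ w : Fin n → ℤ,
      lam (w + uposZ u) * fallP (fun j => v j + ((w j + uposZ u j : ℤ) : ℂ)) (uposN u)
        = lam (w + unegZ u) *
            fallP (fun j => v j + ((w j + unegZ u j : ℤ) : ℂ)) (unegN u)) :
    ∀ u : Fin n → ℤ, lam u ≠ 0 →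
      ¬ ∃ u' : Fin n → ℤ, A.mulVec u' = 0 ∧
        nsup (fun j => v j + ((u j + u' j : ℤ) : ℂ))
          ⊂ nsup (fun j => v j + ((u j : ℤ) : ℂ)) := by
  rintro u hlam ⟨u', hAu', hsub, hnsub⟩
  set ν : Fin n → ℂ := fun j => v j + (u j : ℂ)
  have hshift : (fun j => v j + ((u j + u' j : ℤ) : ℂ)) = fun j => ν j + u' j := by
    funext j
    push_cast
    ring
  have key := htoric u' hAu' (u - unegZ u')
  simp only [← Pi.add_apply, sub_unegZ_add_uposZ, sub_add_cancel] at key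
  simp only [Pi.add_apply, hshift] at key hsub hnsub
  rw [fallP_uposN_eq_zero hnsub, mul_zero, eq_comm] at key
  exact (mul_ne_zero hlam (fallP_unegN_ne_zero hsub)) key

/-- If `G = Σ λ_{v+u} x^{v+u}` is a formal logarithm-free series solution of `H_A(β)`
supported on `v + ker_ℤ(A)` (given by its coefficient function `lam`, with the toric
equations expressed by coefficient matching), then every exponent `v+u` appearing in
`G` with nonzero coefficient has minimal negative support. -/
theorem stmt14 (d n : ℕ) (A : Matrix (Fin d) (Fin n) ℤ) (β : Fin d → ℂ) (v : Fin n → ℂ)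
    (hAv : ∀ i, ∑ j, (A i j : ℂ) * v j = β i)
    (lam : (Fin n → ℤ) → ℂ)
    (hsupp : ∀ u, lam u ≠ 0 → A.mulVec u = 0)
    (htoric : ∀ u : Fin n → ℤ, A.mulVec u = 0 → ∀ w : Fin n → ℤ,
      lam (w + uposZ u) * fallP (fun j => v j + ((w j + uposZ u j : ℤ) : ℂ)) (uposN u)
        = lam (w + unegZ u) *
            fallP (fun j => v j + ((w j + unegZ u j : ℤ) : ℂ)) (unegN u)) :
    ∀ u : Fin n → ℤ, lam u ≠ 0 →
      ¬ ∃ u' : Fin n → ℤ, A.mulVec u' = 0 ∧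
        nsup (fun j => v j + ((u j + u' j : ℤ) : ℂ))
          ⊂ nsup (fun j => v j + ((u j : ℤ) : ℂ)) :=
  stmt14_general d n A v lam htoric
end

section
/- Let v ∈ ℂⁿ be a vector with minimal negative support, N_v = {u ∈ ker_ℤ(A) : nsup(u+v) = nsup(v)}, and suppose ψ = Σ_{u ∈ N_v} λ_{v+u} x^{v+u} is a formal solution of H_A(β) with λ_v ≠ 0. Then for every u ∈ N_v, λ_{v+u} = λ_v · [v]_{u₋}/[v+u]_{u₊}; that is, ψ = λ_v φ_v where φ_v is the canonical logarithm-free series. -/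
open scoped Classical

/-! The toric equation for `u` with `w = -u₋` relates `λ_{v+u}` directly to `λ_v`:
`λ_{v+u} [v+u]_{u₊} = λ_v [v]_{u₋}`. The falling factorial `[v+u]_{u₊}` vanishes only if
some `vⱼ` is a negative integer `≥ -uⱼ`; then `vⱼ + uⱼ ≥ 0`, so `j ∈ nsup v \ nsup (v+u)`,
which the hypothesis `nsup (v+u) = nsup v` excludes. -/

open Finset

theorem prod_range_add_sub_eq_prod_range_add_succ {R : Type*} [CommRing R] (c : R) (m : ℕ) :
    ∏ l ∈ range m, (c + m - l) = ∏ l ∈ range m, (c + (l + 1)) := by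
  rw [← prod_range_reflect (fun l => c + (l + 1)) m]
  refine prod_congr rfl fun l hl => ?_
  have hlm : l + 1 ≤ m := mem_range.mp hl
  rw [show m - 1 - l = m - (l + 1) by omega, Nat.cast_sub hlm]
  push_cast
  ring

section FallingFactorial

variable {n : ℕ}

theorem fallP_congr {s t : Fin n → ℂ} {a : Fin n → ℕ} (h : ∀ j, a j ≠ 0 → s j = t j) :
    fallP s a = fallP t a := by
  refine prod_congr rfl fun j _ => ?_
  by_cases ha : a j = 0
  · simp [ha]
  · rw [h j ha]

theorem fallP_add_natCast_self (s : Fin n → ℂ) (a : Fin n → ℕ) :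
    fallP (fun j => s j + a j) a = ∏ j, ∏ l ∈ range (a j), (s j + (l + 1)) :=
  prod_congr rfl fun j _ => prod_range_add_sub_eq_prod_range_add_succ (s j) (a j)

theorem fallP_add_intCast_uposN (v : Fin n → ℂ) (u : Fin n → ℤ) :
    fallP (fun j => v j + u j) (uposN u) = ∏ j, ∏ l ∈ range (uposN u j), (v j + (l + 1)) := by
  rw [← fallP_add_natCast_self]
  refine fallP_congr fun j hj => ?_
  have hu : ((uposN u j : ℕ) : ℤ) = u j := Int.toNat_of_nonneg (by simp [uposN] at hj; omega)
  rw [← hu, Int.cast_natCast]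

theorem prod_range_uposN_add_succ_ne_zero {v : Fin n → ℂ} {u : Fin n → ℤ}
    (hns : nsup v ⊆ nsup (fun j => v j + u j)) :
    ∏ j, ∏ l ∈ range (uposN u j), (v j + (l + 1)) ≠ 0 := by
  refine prod_ne_zero_iff.mpr fun j _ => prod_ne_zero_iff.mpr fun l hl h0 => ?_
  have hlu : (l : ℤ) < u j := by simp only [mem_range, uposN] at hl; omega
  have hvj : v j = ((-(l + 1) : ℤ) : ℂ) := by push_cast; linear_combination h0
  obtain ⟨k, hk, hvuj : v j + u j = k⟩ := hns ⟨-(l + 1), by omega, hvj⟩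
  have hvuj' : u j - (l + 1) = k :=
    Int.cast_injective (α := ℂ) (by rw [← hvuj, hvj]; push_cast; ring)
  omega

end FallingFactorial

theorem neg_unegZ_add_uposZ {n : ℕ} (u : Fin n → ℤ) : -unegZ u + uposZ u = u := by
  ext j
  simp only [Pi.add_apply, Pi.neg_apply, uposZ, unegZ]
  omega

theorem stmt15_general (d n : ℕ) (A : Matrix (Fin d) (Fin n) ℤ) (v : Fin n → ℂ)
    (lam : (Fin n → ℤ) → ℂ)
    (htoric : ∀ u : Fin n → ℤ, A.mulVec u = 0 → ∀ w : Fin n → ℤ,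
      lam (w + uposZ u) * fallP (fun j => v j + ((w j + uposZ u j : ℤ) : ℂ)) (uposN u)
        = lam (w + unegZ u) *
            fallP (fun j => v j + ((w j + unegZ u j : ℤ) : ℂ)) (unegN u)) :
    ∀ u : Fin n → ℤ, A.mulVec u = 0 → nsup (fun j => v j + (u j : ℂ)) = nsup v →
      lam u = lam 0 * hypCoeff v u := by
  intro u hAu hns
  have hrel := htoric u hAu (-unegZ u)
  have hw : ∀ j, -unegZ u j + uposZ u j = u j := fun j => congrFun (neg_unegZ_add_uposZ u) j
  simp only [Pi.neg_apply, hw, neg_add_cancel, neg_unegZ_add_uposZ, Int.cast_zero, add_zero,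
    fallP_add_intCast_uposN] at hrel
  rw [hypCoeff, ← mul_div_assoc, eq_div_iff (prod_range_uposN_add_succ_ne_zero hns.ge)]
  exact hrel

/-- Let `v` have minimal negative support and let
`ψ = Σ_{u ∈ N_v} λ_{v+u} x^{v+u}` (given by its coefficient function `lam`, supported
on `N_v = {u ∈ ker_ℤ A : nsup(v+u) = nsup(v)}`) be a formal solution of `H_A(β)` with
`λ_v = lam 0 ≠ 0`.  Then `λ_{v+u} = λ_v · [v]_{u₋}/[v+u]_{u₊}` for every `u ∈ N_v`;
that is, `ψ = λ_v φ_v`. -/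
theorem stmt15 (d n : ℕ) (A : Matrix (Fin d) (Fin n) ℤ) (β : Fin d → ℂ) (v : Fin n → ℂ)
    (hAv : ∀ i, ∑ j, (A i j : ℂ) * v j = β i)
    (hmin : ¬ ∃ u : Fin n → ℤ, u ≠ 0 ∧ A.mulVec u = 0 ∧
      nsup (fun j => v j + (u j : ℂ)) ⊂ nsup v)
    (lam : (Fin n → ℤ) → ℂ)
    (hsupp : ∀ u, lam u ≠ 0 →
      A.mulVec u = 0 ∧ nsup (fun j => v j + (u j : ℂ)) = nsup v)
    (htoric : ∀ u : Fin n → ℤ, A.mulVec u = 0 → ∀ w : Fin n → ℤ,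
      lam (w + uposZ u) * fallP (fun j => v j + ((w j + uposZ u j : ℤ) : ℂ)) (uposN u)
        = lam (w + unegZ u) *
            fallP (fun j => v j + ((w j + unegZ u j : ℤ) : ℂ)) (unegN u))
    (hlam0 : lam 0 ≠ 0) :
    ∀ u : Fin n → ℤ, A.mulVec u = 0 → nsup (fun j => v j + (u j : ℂ)) = nsup v →
      lam u = lam 0 * hypCoeff v u :=
  stmt15_general d n A v lam htoric
end

section
/- Suppose the functions ψ₁,…,ψ_k are formal Nilsson series in the direction of a weight vector w whose initial series in_w(ψ₁),…,in_w(ψ_k) are ℂ-linearly independent. Then ψ₁,…,ψ_k are ℂ-linearly independent. Conversely, if ψ₁,…,ψ_k are ℂ-linearly independent Nilsson series, there exists an invertible k×k complex matrix (λ_{ij}) such that the series χ_i = Σ_j λ_{ij} ψ_j have ℂ-linearly independent initial series in_w(χ₁),…,in_w(χ_k). -/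
open scoped Classical

/-- A term `x^a (log x)^b` of a formal Nilsson series is indexed by the pair `(a, b)`;
a formal series is encoded by its coefficient function on terms. -/
abbrev NTerm (n : ℕ) := (Fin n → ℂ) × (Fin n → ℕ)

/-- The real part of the `w`-weight of an exponent `a ∈ ℂⁿ`: `Re(a·w)`. -/
noncomputable def wtRe {n : ℕ} (w : Fin n → ℝ) (a : Fin n → ℂ) : ℝ :=
  ∑ i, (a i).re * w i

/-- The initial series `in_w(ψ)`: the subseries of terms whose weight `Re(a·w)` is
minimal among the nonzero terms of `ψ`. -/
noncomputable def inSer {n : ℕ} (w : Fin n → ℝ) (ψ : NTerm n → ℂ) : NTerm n → ℂ :=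
  fun p =>
    if ψ p ≠ 0 ∧ ∀ q : NTerm n, ψ q ≠ 0 → wtRe w p.1 ≤ wtRe w q.1 then ψ p else 0

/-- `ψ` is a formal Nilsson series in the direction of `w`: a finite linear
combination of series of the form `Σ_{u∈C} x^{v+u} p_u(log x)` with `C` contained in
the dual of an open cone around `w`, and with uniformly bounded logarithmic degrees. -/
def IsNilsson {n : ℕ} (w : Fin n → ℝ) (ψ : NTerm n → ℂ) : Prop :=
  ∃ (V : Finset (Fin n → ℂ)) (U : Set (Fin n → ℝ)) (K : ℕ),
    IsOpen U ∧ w ∈ U ∧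
    ∀ p : NTerm n, ψ p ≠ 0 →
      (∀ i, p.2 i ≤ K) ∧
      ∃ v ∈ V, ∃ u : Fin n → ℤ, (p.1 = fun i => v i + u i) ∧
        (u = 0 ∨ ∀ w' ∈ U, 0 < ∑ i, (u i : ℝ) * w' i)

/-!
Cutting a linear relation `∑ gᵢ ψᵢ = 0` down to the least weight `μ` at which some `ψᵢ` with
`gᵢ ≠ 0` starts leaves a relation between the initial series of the `ψᵢ` starting at `μ`; this
gives the first part.

For the converse, a Nilsson series has only finitely many weights below any bound (an exponent
`v + u` with `u` positive on an open cone around `w` and `u·w` bounded ranges over a finite set),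
so every series in `V = span ψ` has its weights in one well-founded set. Let `μ` be the least
weight occurring in `V` and `T` the projection onto the terms of weight `μ`. Lifting a basis of
`T V` to `V` gives series whose initial series form that basis, while `V ∩ ker T` has smaller
dimension and no terms of weight `μ`, so induction supplies the remaining series; the two
families of initial series have disjoint sets of weights.
-/

open Set Submodule Module

theorem isWF_of_finite_inter_Iic {α : Type*} [Preorder α] {s : Set α}
    (hs : ∀ B, (s ∩ Iic B).Finite) : s.IsWF := by
  rw [isWF_iff_no_descending_seq]
  intro f hf hfs
  refine infinite_range_of_injective hf.injective ((hs (f 0)).subset ?_)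
  rintro _ ⟨m, rfl⟩
  exact ⟨hfs m, hf.antitone (Nat.zero_le m)⟩

theorem half_mul_sum_abs_lt_of_forall_ball_pos {n : ℕ} {u w : Fin n → ℝ} {δ : ℝ} (hδ : 0 < δ)
    (h : ∀ w' ∈ Metric.ball w δ, 0 < ∑ i, u i * w' i) :
    δ / 2 * ∑ i, |u i| < ∑ i, u i * w i := by
  set w' : Fin n → ℝ := fun i => w i - δ / 2 * SignType.sign (u i)
  have hw' : w' ∈ Metric.ball w δ := by
    rw [Metric.mem_ball, dist_pi_lt_iff hδ]
    intro i
    rw [Real.dist_eq, sub_sub_cancel_left, abs_neg, abs_mul, abs_of_pos (half_pos hδ)]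
    rcases lt_trichotomy (u i) 0 with hu | hu | hu <;> simp [hu] <;> linarith
  have hdot : ∑ i, u i * w' i = ∑ i, u i * w i - δ / 2 * ∑ i, |u i| := by
    simp only [w', mul_sub, Finset.sum_sub_distrib, Finset.mul_sum, ← self_mul_sign]
    congr 1
    exact Finset.sum_congr rfl fun i _ => by ring
  linarith [h w' hw']

theorem finite_setOf_forall_pos_dot_le {n : ℕ} {U : Set (Fin n → ℝ)} {w : Fin n → ℝ}
    (hU : IsOpen U) (hw : w ∈ U) (C : ℝ) :
    {u : Fin n → ℤ | (∀ w' ∈ U, 0 < ∑ i, (u i : ℝ) * w' i) ∧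
      ∑ i, (u i : ℝ) * w i ≤ C}.Finite := by
  obtain ⟨δ, hδ, hball⟩ := Metric.isOpen_iff.1 hU w hw
  set N : ℤ := ⌈2 * C / δ⌉
  refine (finite_Icc (fun _ => -N) (fun _ => N)).subset ?_
  rintro u ⟨hpos, hC⟩
  have hsum := half_mul_sum_abs_lt_of_forall_ball_pos hδ fun w' hw' => hpos w' (hball hw')
  have hu : ∀ j, |(u j : ℝ)| ≤ N := fun j =>
    calc |(u j : ℝ)| ≤ ∑ i, |(u i : ℝ)| :=
          Finset.single_le_sum (f := fun i => |(u i : ℝ)|) (fun i _ => abs_nonneg _)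
            (Finset.mem_univ j)
      _ ≤ 2 * C / δ := by rw [le_div_iff₀ hδ]; linarith
      _ ≤ N := Int.le_ceil _
  exact ⟨fun j => (abs_le.1 (by exact_mod_cast hu j)).1,
    fun j => (abs_le.1 (by exact_mod_cast hu j)).2⟩

section Weights

variable {n : ℕ} (w : Fin n → ℝ)

def weights (ψ : NTerm n → ℂ) : Set ℝ :=
  (fun p => wtRe w p.1) '' Function.support ψ

variable {w}

theorem weights_eq_empty {ψ : NTerm n → ℂ} : weights w ψ = ∅ ↔ ψ = 0 := by
  simp [weights]

theorem wtRe_add_intCast (v : Fin n → ℂ) (u : Fin n → ℤ) :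
    wtRe w (fun i => v i + u i) = wtRe w v + ∑ i, (u i : ℝ) * w i := by
  simp [wtRe, add_mul, Finset.sum_add_distrib]

theorem IsNilsson.finite_weights_inter_Iic {ψ : NTerm n → ℂ} (hψ : IsNilsson w ψ) (B : ℝ) :
    (weights w ψ ∩ Iic B).Finite := by
  obtain ⟨V, U, _, hU, hwU, hterms⟩ := hψ
  refine (V.finite_toSet.biUnion fun v _ =>
    ((finite_setOf_forall_pos_dot_le hU hwU (B - wtRe w v)).insert 0).image
      fun u => wtRe w v + ∑ i, (u i : ℝ) * w i).subset ?_
  rintro _ ⟨⟨p, hp, rfl⟩, hpB⟩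
  obtain ⟨-, v, hv, u, hpu, hu⟩ := hterms p hp
  have hwp : wtRe w p.1 = wtRe w v + ∑ i, (u i : ℝ) * w i := by rw [hpu, wtRe_add_intCast]
  refine mem_iUnion₂.2 ⟨v, hv, u, ?_, hwp.symm⟩
  rcases hu with rfl | hu
  · exact mem_insert _ _
  · exact Or.inr ⟨hu, by rw [mem_Iic] at hpB; linarith⟩

theorem weights_inSer_subset (ψ : NTerm n → ℂ) : weights w (inSer w ψ) ⊆ weights w ψ := by
  refine image_mono fun p hp => ?_
  by_contra h
  exact hp (by simp [inSer, Function.notMem_support.1 h])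

theorem exists_isLeast_weights_of_inSer_ne_zero {ψ : NTerm n → ℂ} (h : inSer w ψ ≠ 0) :
    ∃ μ, IsLeast (weights w ψ) μ := by
  obtain ⟨p, hp⟩ := Function.ne_iff.1 h
  simp only [inSer, Pi.zero_apply] at hp
  split_ifs at hp with hmin
  · exact ⟨wtRe w p.1, ⟨p, hmin.1, rfl⟩, by rintro _ ⟨q, hq, rfl⟩; exact hmin.2 q hq⟩
  · exact absurd rfl hp

variable (w)

def weightSubmodule (S : Set ℝ) : Submodule ℂ (NTerm n → ℂ) where
  carrier := {ψ | weights w ψ ⊆ S}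
  zero_mem' := by simp [weights]
  add_mem' {ψ φ} hψ hφ := (image_mono (Function.support_add ψ φ)).trans
    ((image_union _ _ _).subset.trans (union_subset hψ hφ))
  smul_mem' c ψ hψ := (image_mono (Function.support_const_smul_subset c ψ)).trans hψ

noncomputable def slice (μ : ℝ) : (NTerm n → ℂ) →ₗ[ℂ] (NTerm n → ℂ) where
  toFun ψ p := if wtRe w p.1 = μ then ψ p else 0
  map_add' ψ φ := by ext p; by_cases h : wtRe w p.1 = μ <;> simp [h]
  map_smul' c ψ := by ext p; by_cases h : wtRe w p.1 = μ <;> simp [h]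

variable {w}

theorem disjoint_weightSubmodule {S T : Set ℝ} (h : Disjoint S T) :
    Disjoint (weightSubmodule w S) (weightSubmodule w T) := by
  rw [Submodule.disjoint_def]
  intro ψ hS hT
  exact weights_eq_empty.1 (subset_empty_iff.1 fun _ hr => h.ne_of_mem (hS hr) (hT hr) rfl)

theorem slice_apply (μ : ℝ) (ψ : NTerm n → ℂ) (p : NTerm n) :
    slice w μ ψ p = if wtRe w p.1 = μ then ψ p else 0 := rfl

theorem weights_slice_subset (μ : ℝ) (ψ : NTerm n → ℂ) : weights w (slice w μ ψ) ⊆ {μ} := by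
  rintro _ ⟨p, hp, rfl⟩
  by_contra h
  exact hp (if_neg h)

theorem slice_eq_zero_iff {μ : ℝ} {ψ : NTerm n → ℂ} : slice w μ ψ = 0 ↔ μ ∉ weights w ψ := by
  simp only [funext_iff, slice_apply, Pi.zero_apply, weights, mem_image, Function.mem_support]
  grind

theorem inSer_eq_slice_of_isLeast {μ : ℝ} {ψ : NTerm n → ℂ} (h : IsLeast (weights w ψ) μ) :
    inSer w ψ = slice w μ ψ := by
  obtain ⟨⟨q, hq, rfl⟩, hle⟩ := h
  ext p
  by_cases hp : ψ p = 0
  · simp [inSer, slice_apply, hp]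
  have hpq : wtRe w q.1 ≤ wtRe w p.1 := hle ⟨p, hp, rfl⟩
  by_cases hpμ : wtRe w p.1 = wtRe w q.1
  · rw [slice_apply, if_pos hpμ, inSer, if_pos ⟨hp, fun r hr => hpμ ▸ hle ⟨r, hr, rfl⟩⟩]
  · rw [slice_apply, if_neg hpμ, inSer,
      if_neg fun hmin => hpμ (le_antisymm (hmin.2 q hq) hpq)]

end Weights

section InitialSeries

variable {n : ℕ} {w : Fin n → ℝ}

theorem linearIndependent_of_linearIndependent_inSer {ι : Type*} {ψ : ι → NTerm n → ℂ}
    (h : LinearIndependent ℂ fun i => inSer w (ψ i)) : LinearIndependent ℂ ψ := by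
  choose μ hμ using fun i => exists_isLeast_weights_of_inSer_ne_zero (h.ne_zero i)
  rw [linearIndependent_iff'] at h ⊢
  intro s g hg
  by_contra! hne
  obtain ⟨i₀, hi₀, hmin⟩ := (s.filter (g · ≠ 0)).exists_min_image μ
    (by obtain ⟨i, hi, hgi⟩ := hne; exact ⟨i, Finset.mem_filter.2 ⟨hi, hgi⟩⟩)
  rw [Finset.mem_filter] at hi₀
  have hslice : ∀ i ∈ s, g i • slice w (μ i₀) (ψ i) =
      (if μ i = μ i₀ then g i else 0) • inSer w (ψ i) := by
    intro i hi
    by_cases hgi : g i = 0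
    · simp [hgi]
    have hle : μ i₀ ≤ μ i := hmin i (Finset.mem_filter.2 ⟨hi, hgi⟩)
    split_ifs with heq
    · rw [inSer_eq_slice_of_isLeast (heq ▸ hμ i)]
    · rw [slice_eq_zero_iff.2 fun hmem => heq (le_antisymm ((hμ i).2 hmem) hle),
        smul_zero, zero_smul]
  have hrel : ∑ i ∈ s, (if μ i = μ i₀ then g i else 0) • inSer w (ψ i) = 0 := by
    rw [← Finset.sum_congr rfl hslice]
    simp only [← map_smul, ← map_sum, hg, map_zero]
  simpa [hi₀.2] using h s _ hrel i₀ hi₀.1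

theorem linearIndependent_inSer_sum_elim {ι ι' : Type*} {μ : ℝ} {b : ι → NTerm n → ℂ}
    {c : ι' → NTerm n → ℂ} (hb : LinearIndependent ℂ fun a => slice w μ (b a))
    (hbμ : ∀ a, ∀ r ∈ weights w (b a), μ ≤ r) (hc : LinearIndependent ℂ fun j => inSer w (c j))
    (hcμ : ∀ j, μ ∉ weights w (c j)) :
    LinearIndependent ℂ fun s => inSer w (Sum.elim b c s) := by
  have hbc : (fun s => inSer w (Sum.elim b c s)) =
      Sum.elim (fun a => slice w μ (b a)) fun j => inSer w (c j) := by
    ext1 (a | j)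
    · exact inSer_eq_slice_of_isLeast
        ⟨not_not.1 (slice_eq_zero_iff.not.1 (hb.ne_zero a)), hbμ a⟩
    · rfl
  rw [hbc]
  refine hb.sum_type hc ((disjoint_weightSubmodule (w := w) (S := {μ}) disjoint_compl_right).mono
    (span_le.2 ?_) (span_le.2 ?_))
  · rintro _ ⟨a, rfl⟩
    exact weights_slice_subset μ (b a)
  · rintro _ ⟨j, rfl⟩
    exact (weights_inSer_subset (c j)).trans (subset_compl_singleton_iff.2 (hcμ j))

theorem exists_isLeast_weights_of_ne_bot {A : Set ℝ} (hA : A.IsWF)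
    {V : Submodule ℂ (NTerm n → ℂ)} (hVA : V ≤ weightSubmodule w A) (hV : V ≠ ⊥) :
    ∃ μ, IsLeast (⋃ v ∈ V, weights w v) μ := by
  have hne : (⋃ v ∈ V, weights w v).Nonempty := by
    obtain ⟨v, hv, hv0⟩ := V.ne_bot_iff.1 hV
    obtain ⟨r, hr⟩ := nonempty_iff_ne_empty.2 (weights_eq_empty.not.2 hv0)
    exact ⟨r, mem_iUnion₂.2 ⟨v, hv, hr⟩⟩
  have hwf : (⋃ v ∈ V, weights w v).IsWF := hA.mono (iUnion₂_subset fun v hv => hVA hv)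
  exact ⟨hwf.min hne, hwf.min_mem hne, fun _ hr => hwf.min_le hne hr⟩

theorem exists_linearIndependent_inSer {A : Set ℝ} (hA : A.IsWF)
    (V : Submodule ℂ (NTerm n → ℂ)) [FiniteDimensional ℂ V] (hVA : V ≤ weightSubmodule w A) :
    ∃ φ : Fin (finrank ℂ V) → NTerm n → ℂ,
      (∀ i, φ i ∈ V) ∧ LinearIndependent ℂ fun i => inSer w (φ i) := by
  induction hd : finrank ℂ V using Nat.strong_induction_on generalizing V with
  | _ d IH =>
  rcases eq_or_ne V ⊥ with rfl | hV
  · subst hd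
    rw [finrank_bot]
    exact ⟨Fin.elim0, fun i => i.elim0, linearIndependent_empty_type⟩
  obtain ⟨μ, hμV, hμ⟩ := exists_isLeast_weights_of_ne_bot hA hVA hV
  obtain ⟨v₀, hv₀, hμv₀⟩ := mem_iUnion₂.1 hμV
  set f := (slice w μ).domRestrict V
  set K := (LinearMap.ker f).map V.subtype
  have hKV : K ≤ V ⊓ weightSubmodule w {μ}ᶜ := by
    rintro _ ⟨x, hx, rfl⟩
    exact ⟨x.2, subset_compl_singleton_iff.2 (slice_eq_zero_iff.1 hx)⟩
  have hrank : finrank ℂ (LinearMap.range f) + finrank ℂ K = d := by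
    rw [Submodule.finrank_map_subtype_eq, f.finrank_range_add_finrank_ker, hd]
  have hpos : 0 < finrank ℂ (LinearMap.range f) :=
    Module.finrank_pos_iff_exists_ne_zero.2 ⟨⟨f ⟨v₀, hv₀⟩, LinearMap.mem_range_self f _⟩,
      fun h => slice_eq_zero_iff.1 (congrArg Subtype.val h) hμv₀⟩
  obtain ⟨φ', hφ'K, hφ'⟩ := IH _ (by omega) K ((hKV.trans inf_le_left).trans hVA) rfl
  set e := Module.finBasis ℂ (LinearMap.range f)
  choose b hb using fun a => LinearMap.mem_range.1 (e a).2
  have hbe : LinearIndependent ℂ fun a => slice w μ (b a) := by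
    rw [show (fun a => slice w μ (b a)) = fun a => (e a : NTerm n → ℂ) from funext hb]
    exact e.linearIndependent.map' (LinearMap.range f).subtype (LinearMap.range f).ker_subtype
  have hχ := linearIndependent_inSer_sum_elim hbe
    (fun a _ hr => hμ (mem_iUnion₂.2 ⟨_, (b a).2, hr⟩)) hφ' fun j h => (hKV (hφ'K j)).2 h rfl
  have hχV : ∀ s, Sum.elim (fun a => (b a : NTerm n → ℂ)) φ' s ∈ V :=
    Sum.forall.2 ⟨fun a => (b a).2, fun j => (hKV (hφ'K j)).1⟩
  exact ⟨_ ∘ (finSumFinEquiv.trans (finCongr hrank)).symm, fun i => hχV _,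
    hχ.comp _ (Equiv.injective _)⟩

end InitialSeries

theorem exists_isUnit_matrix_of_linearIndependent {K E : Type*} [Field K] [AddCommGroup E]
    [Module K E] {k : ℕ} {ψ φ : Fin k → E} (hφ : LinearIndependent K φ)
    (hφψ : ∀ i, φ i ∈ span K (range ψ)) :
    ∃ M : Matrix (Fin k) (Fin k) K, IsUnit M ∧ ∀ i, ∑ j, M i j • ψ j = φ i := by
  choose M hM using fun i => (Submodule.mem_span_range_iff_exists_fun K).1 (hφψ i)
  refine ⟨M, Matrix.linearIndependent_rows_iff_isUnit.1 ?_, hM⟩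
  refine LinearIndependent.of_comp (Fintype.linearCombination K ψ) ?_
  convert hφ using 1
  funext i
  exact (Fintype.linearCombination_apply K ψ _).trans (hM i)

/-- If the initial series `in_w(ψ₁),…,in_w(ψ_k)` are linearly independent, so are
`ψ₁,…,ψ_k`; conversely, if `ψ₁,…,ψ_k` are linearly independent, some invertible
linear combinations `χᵢ = Σⱼ λᵢⱼ ψⱼ` have linearly independent initial series. -/
theorem stmt18 (n k : ℕ) (w : Fin n → ℝ) (ψ : Fin k → (NTerm n → ℂ))
    (hN : ∀ i, IsNilsson w (ψ i)) :
    (LinearIndependent ℂ (fun i => inSer w (ψ i)) → LinearIndependent ℂ ψ) ∧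
    (LinearIndependent ℂ ψ →
      ∃ M : Matrix (Fin k) (Fin k) ℂ, IsUnit M ∧
        LinearIndependent ℂ
          (fun i => inSer w (fun p => ∑ j, M i j * ψ j p))) := by
  refine ⟨linearIndependent_of_linearIndependent_inSer, fun hli => ?_⟩
  set A := ⋃ i, weights w (ψ i)
  have hA : A.IsWF := isWF_of_finite_inter_Iic fun B => by
    simpa only [A, iUnion_inter] using finite_iUnion fun i => (hN i).finite_weights_inter_Iic B
  have hVA : span ℂ (range ψ) ≤ weightSubmodule w A :=
    span_le.2 (by rintro _ ⟨i, rfl⟩; exact subset_iUnion (fun i => weights w (ψ i)) i)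
  have := FiniteDimensional.span_of_finite ℂ (finite_range ψ)
  obtain ⟨φ, hφV, hφ⟩ := exists_linearIndependent_inSer hA _ hVA
  have hk : finrank ℂ (span ℂ (range ψ)) = k := by simpa using finrank_span_eq_card hli
  have hφk : LinearIndependent ℂ fun i => inSer w (φ (finCongr hk.symm i)) :=
    hφ.comp _ (finCongr hk.symm).injective
  obtain ⟨M, hM, hMφ⟩ := exists_isUnit_matrix_of_linearIndependent
    (linearIndependent_of_linearIndependent_inSer hφk) fun i => hφV _
  refine ⟨M, hM, ?_⟩
  have hχ : ∀ i, (fun p => ∑ j, M i j * ψ j p) = φ (finCongr hk.symm i) := fun i => by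
    rw [← hMφ i]
    ext p
    simp [Finset.sum_apply]
  simpa only [hχ] using hφk
end
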